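/- arXiv:1501.04746 — 6 statements merged into one kernel-verified Lean document; each statement's English description precedes it below -/
import Mathlib

section
/- Fix an integer N ≥ 1. For any two configurations σ, σ' ∈ Ω_N there exists a finite sequence σ = σ_0, σ_1, …, σ_k = σ' in Ω_N such that each σ_{i+1} is obtained from σ_i by an allowed move at some site. Consequently, the continuous-time Markov chain on Ω_N with generator Q_N is irreducible. -/
open Finset

/-- Configuration space `Ω_N = {−1,1}^{1,…,N}`, encoded with `true ↔ +1` and `false ↔ −1`. -/
abbrev Conf (N : ℕ) : Type := Fin N → Bool

/-- The set of sites `y > x` carrying the opposite spin to `x`. -/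
def oppRight {N : ℕ} (σ : Conf N) (x : Fin N) : Finset (Fin N) :=
  Finset.univ.filter fun y => x < y ∧ σ y ≠ σ x

/-- The allowed move at site `x`: exchange the spin at `x` with the first opposite spin
`z(x,σ)` to its right, or flip the spin at `x` alone if no such site exists. -/
def move {N : ℕ} (σ : Conf N) (x : Fin N) : Conf N :=
  if h : (oppRight σ x).Nonempty then
    Function.update (Function.update σ x (!σ x)) ((oppRight σ x).min' h)
      (!σ ((oppRight σ x).min' h))
  else
    Function.update σ x (!σ x)

lemma lt_min' {N : ℕ} (σ : Conf N) (x : Fin N) (h : (oppRight σ x).Nonempty) :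
    x < (oppRight σ x).min' h := by
  have := Finset.min'_mem _ h
  exact ((Finset.mem_filter.mp this).2).1

lemma move_apply_self {N : ℕ} (σ : Conf N) (x : Fin N) : move σ x x = !σ x := by
  unfold move
  split_ifs with h
  · rw [Function.update_of_ne (ne_of_lt (lt_min' σ x h)), Function.update_self]
  · rw [Function.update_self]

lemma move_apply_lt {N : ℕ} (σ : Conf N) (x y : Fin N) (hy : y < x) :
    move σ x y = σ y := by
  unfold move
  split_ifs with h
  · rw [Function.update_of_ne (ne_of_lt (hy.trans (lt_min' σ x h))),
      Function.update_of_ne (ne_of_lt hy)]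
  · rw [Function.update_of_ne (ne_of_lt hy)]

/-- Any configuration can be reached from any other by a finite sequence
of allowed moves; consequently the continuous-time chain with generator `Q_N` is
irreducible. -/
theorem toom_irreducible (N : ℕ) (hN : 1 ≤ N) (σ σ' : Conf N) :
    Relation.ReflTransGen (fun τ τ' : Conf N => ∃ x : Fin N, move τ x = τ') σ σ' := by
  suffices h : ∀ k : ℕ, k ≤ N → ∃ τ : Conf N,
      Relation.ReflTransGen (fun τ τ' : Conf N => ∃ x : Fin N, move τ x = τ') σ τ ∧
      ∀ y : Fin N, (y : ℕ) < k → τ y = σ' y by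
    obtain ⟨τ, hτ, hagree⟩ := h N le_rfl
    have hτσ' : τ = σ' := funext fun y => hagree y y.isLt
    exact hτσ' ▸ hτ
  intro k
  induction k with
  | zero => exact fun _ => ⟨σ, .refl, fun y hy => absurd hy (Nat.not_lt_zero _)⟩
  | succ k ih =>
    intro hk
    obtain ⟨τ, hτ, hagree⟩ := ih (Nat.le_of_succ_le hk)
    set x : Fin N := ⟨k, hk⟩ with hxdef
    by_cases hx : τ x = σ' x
    · refine ⟨τ, hτ, fun y hy => ?_⟩
      rcases Nat.lt_succ_iff_lt_or_eq.mp hy with h | h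
      · exact hagree y h
      · have hyx : y = x := Fin.ext h
        rw [hyx]; exact hx
    · refine ⟨move τ x, hτ.tail ⟨x, rfl⟩, fun y hy => ?_⟩
      rcases Nat.lt_succ_iff_lt_or_eq.mp hy with h | h
      · rw [move_apply_lt τ x y (by exact h)]
        exact hagree y h
      · have hyx : y = x := Fin.ext h
        rw [hyx, move_apply_self]
        cases hσ'x : σ' x <;> cases hτx : τ x <;> simp_all
end

section
/- Fix rates λ₊, λ₋ > 0 with λ₊ + λ₋ = 1 and integers 1 ≤ N ≤ M, and let r : Ω_M → Ω_N denote restriction of a configuration to the sites 1,…,N. For every function f : Ω_N → ℝ and every σ ∈ Ω_M, (Q_M(f∘r))(σ) = (Q_N f)(r(σ)), where a generator acts on functions by (Q g)(σ) = Σ_{σ'} Q(σ,σ')·g(σ'). (That is, the restriction of the chain on {1,…,M} to the first N sites is itself a Markov chain, with generator Q_N.) -/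
open Finset

/-- The rate `λ_{σ(x)}`: `λ₊` for a `+1` spin, `λ₋` for a `−1` spin. -/
def rate (lamP lamM : ℝ) (b : Bool) : ℝ := if b then lamP else lamM

/-- Total jump rate from `σ` to `σ'`: the sum of `λ_{σ(x)}` over the sites `x` whose
allowed move turns `σ` into `σ'`. -/
noncomputable def jumpRate (lamP lamM : ℝ) {N : ℕ} (σ σ' : Conf N) : ℝ :=
  ∑ x ∈ Finset.univ.filter (fun x => move σ x = σ'), rate lamP lamM (σ x)

/-- The Toom-interface generator `Q_N` as a matrix on `Ω_N`. -/
noncomputable def toomGen (lamP lamM : ℝ) (N : ℕ) : Matrix (Conf N) (Conf N) ℝ :=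
  fun σ σ' =>
    if σ' = σ then -∑ τ ∈ Finset.univ.filter (fun τ => τ ≠ σ), jumpRate lamP lamM σ τ
    else jumpRate lamP lamM σ σ'

/-- A stationary distribution for `Q_N`. -/
noncomputable def IsStationaryToom (lamP lamM : ℝ) (N : ℕ) (π : Conf N → ℝ) : Prop :=
  (∀ σ, 0 ≤ π σ) ∧ (∑ σ, π σ = 1) ∧ (∀ σ', ∑ σ, π σ * toomGen lamP lamM N σ σ' = 0)


/-- Restriction of a configuration on `{1,…,M}` to the first `N` sites. -/
def restrictConf {N M : ℕ} (h : N ≤ M) (σ : Conf M) : Conf N :=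
  fun x => σ (Fin.castLE h x)

lemma mem_oppRight {N : ℕ} {σ : Conf N} {x y : Fin N} :
    y ∈ oppRight σ x ↔ x < y ∧ σ y ≠ σ x := by
  simp [oppRight]

lemma move_ne {N : ℕ} (σ : Conf N) (x : Fin N) : move σ x ≠ σ := by
  intro h
  have := congrFun h x
  rw [move_apply_self] at this
  simp at this

lemma gen_sum (lamP lamM : ℝ) {K : ℕ} (σ : Conf K) (g : Conf K → ℝ) :
    ∑ σ', toomGen lamP lamM K σ σ' * g σ'
      = ∑ x : Fin K, rate lamP lamM (σ x) * (g (move σ x) - g σ) := by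
  have hfib : ∀ (F : Fin K → ℝ),
      ∑ τ ∈ univ.filter (fun τ => τ ≠ σ), ∑ x ∈ univ.filter (fun x => move σ x = τ), F x
        = ∑ x : Fin K, F x := by
    intro F
    exact Finset.sum_fiberwise_of_maps_to (fun x _ => by simp [move_ne σ x]) F
  rw [← Finset.sum_filter_add_sum_filter_not univ (fun τ => τ ≠ σ)]
  have h1 : ∑ τ ∈ univ.filter (fun τ => τ ≠ σ), toomGen lamP lamM K σ τ * g τ
      = ∑ x : Fin K, rate lamP lamM (σ x) * g (move σ x) := by
    rw [← hfib (fun x => rate lamP lamM (σ x) * g (move σ x))]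
    refine Finset.sum_congr rfl fun τ hτ => ?_
    rw [mem_filter] at hτ
    rw [toomGen, if_neg hτ.2, jumpRate, Finset.sum_mul]
    refine Finset.sum_congr rfl fun x hx => ?_
    rw [mem_filter] at hx
    rw [hx.2]
  have h2 : ∑ τ ∈ univ.filter (fun τ => ¬ τ ≠ σ), toomGen lamP lamM K σ τ * g τ
      = -(∑ x : Fin K, rate lamP lamM (σ x)) * g σ := by
    have hfs : univ.filter (fun τ : Conf K => ¬ τ ≠ σ) = {σ} := by
      ext τ; simp
    rw [hfs, Finset.sum_singleton, toomGen, if_pos rfl]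
    congr 2
    rw [← hfib (fun x => rate lamP lamM (σ x))]
    refine Finset.sum_congr rfl fun τ hτ => ?_
    rw [jumpRate]
  rw [h1, h2, neg_mul, ← sub_eq_add_neg, Finset.sum_mul, ← Finset.sum_sub_distrib]
  exact Finset.sum_congr rfl fun x _ => by rw [mul_sub]

lemma restrict_update_lt {N M : ℕ} (h : N ≤ M) (σ : Conf M) (y : Fin M)
    (hy : y.val < N) (b : Bool) :
    restrictConf h (Function.update σ y b)
      = Function.update (restrictConf h σ) ⟨y.val, hy⟩ b := by
  funext w
  have hiff : (Fin.castLE h w = y) ↔ (w = ⟨y.val, hy⟩) := by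
    simp [Fin.ext_iff]
  simp only [restrictConf, Function.update_apply, hiff]

lemma restrict_update_ge {N M : ℕ} (h : N ≤ M) (σ : Conf M) (y : Fin M)
    (hy : N ≤ y.val) (b : Bool) :
    restrictConf h (Function.update σ y b) = restrictConf h σ := by
  funext w
  simp only [restrictConf]
  refine Function.update_of_ne (fun he => ?_) _ _
  have := congrArg Fin.val he
  simp only [Fin.coe_castLE] at this
  omega

lemma oppRight_restrict_mem {N M : ℕ} (h : N ≤ M) (σ : Conf M) (x : Fin M)
    (hx : x.val < N) (y' : Fin N) :
    y' ∈ oppRight (restrictConf h σ) ⟨x.val, hx⟩ ↔ Fin.castLE h y' ∈ oppRight σ x := by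
  have hcx : Fin.castLE h (⟨x.val, hx⟩ : Fin N) = x := by ext; simp
  simp only [mem_oppRight, restrictConf, hcx, Fin.lt_def, Fin.coe_castLE]

lemma restrict_move {N M : ℕ} (h : N ≤ M) (σ : Conf M) (x : Fin M) (hx : x.val < N) :
    restrictConf h (move σ x) = move (restrictConf h σ) ⟨x.val, hx⟩ := by
  set x' : Fin N := ⟨x.val, hx⟩ with hx'
  have hcx : Fin.castLE h x' = x := by ext; simp [hx']
  have hσx : restrictConf h σ x' = σ x := by simp [restrictConf, hcx]
  by_cases hne : (oppRight (restrictConf h σ) x').Nonempty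
  · set z' := (oppRight (restrictConf h σ) x').min' hne with hz'
    have hz'mem : z' ∈ oppRight (restrictConf h σ) x' := Finset.min'_mem _ hne
    have hmemM : Fin.castLE h z' ∈ oppRight σ x :=
      (oppRight_restrict_mem h σ x hx z').1 hz'mem
    have hne2 : (oppRight σ x).Nonempty := ⟨_, hmemM⟩
    set z := (oppRight σ x).min' hne2 with hz
    have hzle : z ≤ Fin.castLE h z' := Finset.min'_le _ _ hmemM
    have hzval : z.val < N := lt_of_le_of_lt hzle z'.isLt
    have hzz : z = Fin.castLE h z' := by
      refine le_antisymm hzle ?_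
      have hmemN : (⟨z.val, hzval⟩ : Fin N) ∈ oppRight (restrictConf h σ) x' := by
        rw [oppRight_restrict_mem h σ x hx]
        have : Fin.castLE h (⟨z.val, hzval⟩ : Fin N) = z := by ext; simp
        rw [this]
        exact Finset.min'_mem _ hne2
      have hle := Finset.min'_le _ _ hmemN
      rw [Fin.le_def] at hle ⊢
      simpa using hle
    have hz'eq : (⟨z.val, hzval⟩ : Fin N) = z' := by
      ext; simp [hzz]
    rw [move, dif_pos hne2, move, dif_pos hne, ← hz', ← hz,
      restrict_update_lt h _ z hzval, restrict_update_lt h _ x hx, hz'eq]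
    have hσz : σ z = restrictConf h σ z' := by
      rw [hzz]; simp [restrictConf]
    rw [hσx, ← hσz]
  · rw [move, move, dif_neg hne]
    by_cases hne2 : (oppRight σ x).Nonempty
    · set z := (oppRight σ x).min' hne2 with hz
      have hzge : N ≤ z.val := by
        by_contra hlt
        push_neg at hlt
        refine hne ⟨⟨z.val, hlt⟩, ?_⟩
        rw [oppRight_restrict_mem h σ x hx]
        have : Fin.castLE h (⟨z.val, hlt⟩ : Fin N) = z := by ext; simp
        rw [this]
        exact Finset.min'_mem _ hne2
      rw [dif_pos hne2, ← hz, restrict_update_ge h _ z hzge,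
        restrict_update_lt h _ x hx, hσx]
    · rw [dif_neg hne2, restrict_update_lt h _ x hx, hσx]

lemma restrict_move_ge {N M : ℕ} (h : N ≤ M) (σ : Conf M) (x : Fin M)
    (hx : N ≤ x.val) :
    restrictConf h (move σ x) = restrictConf h σ := by
  rw [move]
  split
  · next hne =>
    have hm := mem_oppRight.1 (Finset.min'_mem _ hne)
    have : N ≤ ((oppRight σ x).min' hne).val := by
      have := hm.1
      rw [Fin.lt_def] at this
      omega
    rw [restrict_update_ge h _ _ this, restrict_update_ge h _ _ hx]
  · rw [restrict_update_ge h _ _ hx]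

/-- The restriction of the Toom chain on `{1,…,M}` to the first `N`
sites is itself Markov, with generator `Q_N`: the generators intertwine with the
restriction map. -/
theorem toom_restriction_markov (lamP lamM : ℝ) (hP : 0 < lamP) (hM : 0 < lamM)
    (hsum : lamP + lamM = 1) (N M : ℕ) (hN : 1 ≤ N) (hNM : N ≤ M)
    (f : Conf N → ℝ) (σ : Conf M) :
    ∑ σ' : Conf M, toomGen lamP lamM M σ σ' * f (restrictConf hNM σ')
      = ∑ η : Conf N, toomGen lamP lamM N (restrictConf hNM σ) η * f η := by
  rw [gen_sum, gen_sum]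
  rw [← Finset.sum_filter_add_sum_filter_not univ (fun x : Fin M => (x : ℕ) < N)]
  have h0 : ∑ x ∈ univ.filter (fun x : Fin M => ¬ (x : ℕ) < N),
      rate lamP lamM (σ x)
        * (f (restrictConf hNM (move σ x)) - f (restrictConf hNM σ)) = 0 := by
    refine Finset.sum_eq_zero fun x hxm => ?_
    rw [mem_filter] at hxm
    rw [restrict_move_ge hNM σ x (by omega)]
    simp
  rw [h0, add_zero]
  refine Finset.sum_bij' (fun x hxm => (⟨x.val, by simpa using hxm⟩ : Fin N))
    (fun x' _ => Fin.castLE hNM x') ?_ ?_ ?_ ?_ ?_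
  · intro a ha; simp
  · intro a ha; simp [a.isLt]
  · intro a ha; ext; simp
  · intro a ha; ext; simp
  · intro a ha
    rw [mem_filter] at ha
    have hx : (a : ℕ) < N := ha.2
    rw [restrict_move hNM σ a hx]
    have hσx : restrictConf hNM σ ⟨a.val, hx⟩ = σ a := by
      have hca : Fin.castLE hNM (⟨a.val, hx⟩ : Fin N) = a := by ext; simp
      simp [restrictConf, hca]
    rw [hσx]
end

section
/- Fix rates λ₊, λ₋ > 0 with λ₊ + λ₋ = 1 and integers 1 ≤ N ≤ M, and let r : Ω_M → Ω_N denote restriction of a configuration to the sites 1,…,N. Let π_M and π_N be the unique stationary distributions of Q_M and Q_N. Then the family (π_N) is consistent: the pushforward of π_M under r equals π_N, i.e., for every η ∈ Ω_N, Σ_{σ ∈ Ω_M : r(σ)=η} π_M(σ) = π_N(η). -/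
open Finset

/-- A stationary distribution for `Q_N`. -/
noncomputable def ToomIsStationary (lamP lamM : ℝ) (N : ℕ) (π : Conf N → ℝ) : Prop :=
  (∀ σ, 0 ≤ π σ) ∧ (∑ σ, π σ = 1) ∧ (∀ σ', ∑ σ, π σ * toomGen lamP lamM N σ σ' = 0)


-- Part 1: basic lemmas about move and the generator
namespace ToomAux

open Finset

lemma move_apply_self {N : ℕ} (σ : Conf N) (x : Fin N) : move σ x x = !σ x := by
  unfold move
  by_cases h : (oppRight σ x).Nonempty
  · rw [dif_pos h]
    have hz : x < (oppRight σ x).min' h := by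
      have := Finset.min'_mem (oppRight σ x) h
      simp only [oppRight, Finset.mem_filter] at this
      exact this.2.1
    rw [Function.update_of_ne hz.ne, Function.update_self]
  · rw [dif_neg h, Function.update_self]

lemma move_ne {N : ℕ} (σ : Conf N) (x : Fin N) : move σ x ≠ σ := by
  intro h
  have := congrFun h x
  rw [move_apply_self] at this
  exact (Bool.not_ne_self (σ x)) this

lemma rate_nonneg {lamP lamM : ℝ} (hP : 0 < lamP) (hM : 0 < lamM) (b : Bool) :
    0 ≤ rate lamP lamM b := by
  unfold rate; split <;> positivity

lemma rate_pos {lamP lamM : ℝ} (hP : 0 < lamP) (hM : 0 < lamM) (b : Bool) :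
    0 < rate lamP lamM b := by
  unfold rate; split <;> assumption

lemma rate_le_one {lamP lamM : ℝ} (hP : 0 < lamP) (hM : 0 < lamM) (hsum : lamP + lamM = 1)
    (b : Bool) : rate lamP lamM b ≤ 1 := by
  unfold rate; split <;> nlinarith

lemma jumpRate_eq {lamP lamM : ℝ} {N : ℕ} (σ τ : Conf N) :
    jumpRate lamP lamM σ τ
      = ∑ x : Fin N, rate lamP lamM (σ x) * (if move σ x = τ then 1 else 0) := by
  unfold jumpRate
  rw [Finset.sum_filter]
  exact Finset.sum_congr rfl fun x _ => by split <;> simp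

/-- Clean formula for the generator. -/
lemma toomGen_eq (lamP lamM : ℝ) {N : ℕ} (σ σ' : Conf N) :
    toomGen lamP lamM N σ σ'
      = (∑ x : Fin N, rate lamP lamM (σ x) * (if move σ x = σ' then 1 else 0))
        - (if σ' = σ then ∑ x : Fin N, rate lamP lamM (σ x) else 0) := by
  unfold toomGen
  by_cases h : σ' = σ
  · rw [if_pos h, if_pos h, h]
    have h1 : ∀ x : Fin N, rate lamP lamM (σ x) * (if move σ x = σ then 1 else 0) = 0 := by
      intro x; rw [if_neg (move_ne σ x), mul_zero]
    rw [Finset.sum_congr rfl (fun x _ => h1 x), Finset.sum_const_zero, zero_sub, neg_inj]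
    have h2 : ∀ τ ∈ Finset.univ.filter (fun τ => τ ≠ σ), jumpRate lamP lamM σ τ
        = ∑ x : Fin N, rate lamP lamM (σ x) * (if move σ x = τ then 1 else 0) :=
      fun τ _ => jumpRate_eq σ τ
    rw [Finset.sum_congr rfl h2, Finset.sum_comm]
    refine Finset.sum_congr rfl fun x _ => ?_
    rw [← Finset.mul_sum]
    have : ∑ τ ∈ Finset.univ.filter (fun τ => τ ≠ σ), (if move σ x = τ then (1:ℝ) else 0) = 1 := by
      rw [Finset.sum_ite_eq (filter (fun τ => τ ≠ σ) univ) (move σ x) (fun _ => (1:ℝ))]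
      simp [move_ne σ x]
    rw [this, mul_one]
  · rw [if_neg h, if_neg h, jumpRate_eq, sub_zero]

lemma toomGen_row_sum (lamP lamM : ℝ) {N : ℕ} (σ : Conf N) :
    ∑ σ' : Conf N, toomGen lamP lamM N σ σ' = 0 := by
  have : ∀ σ' : Conf N, toomGen lamP lamM N σ σ'
      = (∑ x : Fin N, rate lamP lamM (σ x) * (if move σ x = σ' then 1 else 0))
        - (if σ' = σ then ∑ x : Fin N, rate lamP lamM (σ x) else 0) := fun σ' => toomGen_eq _ _ _ _
  rw [Finset.sum_congr rfl (fun σ' _ => this σ'), Finset.sum_sub_distrib]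
  rw [Finset.sum_comm]
  have h1 : ∀ x : Fin N, ∑ σ' : Conf N, rate lamP lamM (σ x) * (if move σ x = σ' then 1 else 0)
      = rate lamP lamM (σ x) := by
    intro x
    rw [← Finset.mul_sum]
    simp
  rw [Finset.sum_congr rfl (fun x _ => h1 x)]
  simp

end ToomAux
namespace ToomAux
open Finset

lemma toomGen_eq' (lamP lamM : ℝ) {N : ℕ} (σ σ' : Conf N) :
    toomGen lamP lamM N σ σ'
      = ∑ x : Fin N, rate lamP lamM (σ x) *
          ((if move σ x = σ' then (1:ℝ) else 0) - (if σ' = σ then 1 else 0)) := by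
  rw [toomGen_eq]
  rw [Finset.sum_congr rfl (fun (x : Fin N) _ => mul_sub (rate lamP lamM (σ x)) _ _),
    Finset.sum_sub_distrib]
  congr 1
  by_cases h : σ' = σ <;> simp [h]

lemma restrict_update {N M : ℕ} (h : N ≤ M) (σ : Conf M) (y : Fin N) (b : Bool) :
    restrictConf h (Function.update σ (Fin.castLE h y) b) = Function.update (restrictConf h σ) y b := by
  funext w
  unfold restrictConf
  by_cases hw : w = y
  · subst hw; simp
  · rw [Function.update_of_ne (fun he => hw (Fin.castLE_injective h he)),
      Function.update_of_ne hw]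

lemma restrict_apply {N M : ℕ} (h : N ≤ M) (σ : Conf M) (y : Fin N) :
    restrictConf h σ y = σ (Fin.castLE h y) := rfl

lemma mem_oppRight {N : ℕ} {σ : Conf N} {x y : Fin N} :
    y ∈ oppRight σ x ↔ x < y ∧ σ y ≠ σ x := by
  simp [oppRight]

lemma cast_mem_oppRight {N M : ℕ} (h : N ≤ M) (σ : Conf M) (x y : Fin N) :
    y ∈ oppRight (restrictConf h σ) x ↔ Fin.castLE h y ∈ oppRight σ (Fin.castLE h x) := by
  simp only [mem_oppRight, restrict_apply, Fin.lt_def, Fin.coe_castLE]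

/-- Lemma A: restriction commutes with moves at sites below `N`. -/
lemma restrict_move {N M : ℕ} (h : N ≤ M) (σ : Conf M) (x : Fin N) :
    restrictConf h (move σ (Fin.castLE h x)) = move (restrictConf h σ) x := by
  by_cases hne : (oppRight (restrictConf h σ) x).Nonempty
  · have hy₀mem : (oppRight (restrictConf h σ) x).min' hne ∈ oppRight (restrictConf h σ) x :=
      Finset.min'_mem _ hne
    set y₀ := (oppRight (restrictConf h σ) x).min' hne with hy₀
    have hbig : Fin.castLE h y₀ ∈ oppRight σ (Fin.castLE h x) :=
      (cast_mem_oppRight h σ x y₀).mp hy₀mem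
    have hne' : (oppRight σ (Fin.castLE h x)).Nonempty := ⟨_, hbig⟩
    have hminB : (oppRight σ (Fin.castLE h x)).min' hne' = Fin.castLE h y₀ := by
      refine le_antisymm (Finset.min'_le _ _ hbig) ?_
      have hwmem : (oppRight σ (Fin.castLE h x)).min' hne' ∈ oppRight σ (Fin.castLE h x) :=
        Finset.min'_mem _ hne'
      set w := (oppRight σ (Fin.castLE h x)).min' hne' with hw
      by_cases hwN : (w : ℕ) < N
      · have hcast : Fin.castLE h (⟨(w : ℕ), hwN⟩ : Fin N) = w := rfl
        have hmem2 : (⟨(w : ℕ), hwN⟩ : Fin N) ∈ oppRight (restrictConf h σ) x := by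
          rw [cast_mem_oppRight h σ, hcast]; exact hwmem
        have := Finset.min'_le _ _ hmem2
        rw [Fin.le_def] at this ⊢
        simpa using this
      · rw [Fin.le_def]
        simp only [Fin.coe_castLE]
        omega
    unfold move
    rw [dif_pos hne', dif_pos hne, hminB]
    funext v
    rw [restrict_apply]
    by_cases hw1 : v = y₀
    · subst hw1
      simp only [Function.update_self]
      rw [← hy₀, Function.update_self]
      rfl
    · have hc1 : Fin.castLE h v ≠ Fin.castLE h y₀ := fun he => hw1 (Fin.castLE_injective h he)
      rw [Function.update_of_ne hc1, Function.update_of_ne hw1]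
      by_cases hw2 : v = x
      · subst hw2
        simp only [Function.update_self]
        rfl
      · have hc2 : Fin.castLE h v ≠ Fin.castLE h x := fun he => hw2 (Fin.castLE_injective h he)
        rw [Function.update_of_ne hc2, Function.update_of_ne hw2]
        rfl
  · unfold move
    rw [dif_neg hne]
    by_cases hne' : (oppRight σ (Fin.castLE h x)).Nonempty
    · rw [dif_pos hne']
      have hzmem : (oppRight σ (Fin.castLE h x)).min' hne' ∈ oppRight σ (Fin.castLE h x) :=
        Finset.min'_mem _ hne'
      set z := (oppRight σ (Fin.castLE h x)).min' hne' with hz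
      have hzN : N ≤ (z : ℕ) := by
        by_contra hlt
        push_neg at hlt
        have hcast : Fin.castLE h (⟨(z : ℕ), hlt⟩ : Fin N) = z := rfl
        refine hne ⟨⟨(z : ℕ), hlt⟩, ?_⟩
        rw [cast_mem_oppRight h σ, hcast]; exact hzmem
      funext w
      have hwz : Fin.castLE h w ≠ z := by
        intro he
        have : (w : ℕ) = (z : ℕ) := by rw [← he]; rfl
        omega
      rw [restrict_apply, Function.update_of_ne hwz]
      by_cases hwx : w = x
      · subst hwx
        simp only [Function.update_self]
        rfl
      · have hc2 : Fin.castLE h w ≠ Fin.castLE h x := fun he => hwx (Fin.castLE_injective h he)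
        rw [Function.update_of_ne hc2, Function.update_of_ne hwx]
        rfl
    · rw [dif_neg hne']
      exact restrict_update h σ x _

lemma move_agree_lt {N : ℕ} (σ : Conf N) (x y : Fin N) (hyx : y < x) :
    move σ x y = σ y := by
  unfold move
  by_cases hne : (oppRight σ x).Nonempty
  · rw [dif_pos hne]
    have hz : x < (oppRight σ x).min' hne :=
      (mem_oppRight.mp (Finset.min'_mem _ hne)).1
    have hym : y < (oppRight σ x).min' hne := hyx.trans hz
    rw [Function.update_of_ne hym.ne, Function.update_of_ne hyx.ne]
  · rw [dif_neg hne, Function.update_of_ne hyx.ne]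

end ToomAux
namespace ToomAux
open Finset

lemma restrict_move_high {N M : ℕ} (h : N ≤ M) (σ : Conf M) (x : Fin M) (hx : N ≤ (x : ℕ)) :
    restrictConf h (move σ x) = restrictConf h σ := by
  funext w
  rw [restrict_apply, restrict_apply]
  exact move_agree_lt σ x (Fin.castLE h w) (by rw [Fin.lt_def]; simp; omega)

/-- The key lumpability identity (★). -/
lemma lump (lamP lamM : ℝ) {N M : ℕ} (h : N ≤ M) (σ : Conf M) (η' : Conf N) :
    ∑ σ' ∈ Finset.univ.filter (fun σ' : Conf M => restrictConf h σ' = η'),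
        toomGen lamP lamM M σ σ'
      = toomGen lamP lamM N (restrictConf h σ) η' := by
  have step1 : ∀ σ' : Conf M, toomGen lamP lamM M σ σ'
      = ∑ x : Fin M, rate lamP lamM (σ x) *
          ((if move σ x = σ' then (1:ℝ) else 0) - (if σ' = σ then 1 else 0)) :=
    fun σ' => toomGen_eq' lamP lamM σ σ'
  rw [Finset.sum_congr rfl (fun σ' _ => step1 σ'), Finset.sum_comm]
  have step2 : ∀ x : Fin M,
      ∑ σ' ∈ Finset.univ.filter (fun σ' : Conf M => restrictConf h σ' = η'),
        rate lamP lamM (σ x) * ((if move σ x = σ' then (1:ℝ) else 0) - (if σ' = σ then 1 else 0))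
      = rate lamP lamM (σ x) *
          ((if restrictConf h (move σ x) = η' then (1:ℝ) else 0)
            - (if restrictConf h σ = η' then 1 else 0)) := by
    intro x
    rw [← Finset.mul_sum, Finset.sum_sub_distrib]
    congr 2
    · rw [Finset.sum_ite_eq (Finset.univ.filter (fun σ' : Conf M => restrictConf h σ' = η'))
        (move σ x) (fun _ => (1:ℝ))]
      simp
    · rw [Finset.sum_ite_eq' (Finset.univ.filter (fun σ' : Conf M => restrictConf h σ' = η'))
        σ (fun _ => (1:ℝ))]
      simp
  rw [Finset.sum_congr rfl (fun x _ => step2 x)]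
  -- reduce to sites below N
  have hvanish : ∀ x : Fin M, x ∈ Finset.univ →
      x ∉ Finset.univ.map ⟨Fin.castLE h, Fin.castLE_injective h⟩ →
      rate lamP lamM (σ x) *
          ((if restrictConf h (move σ x) = η' then (1:ℝ) else 0)
            - (if restrictConf h σ = η' then 1 else 0)) = 0 := by
    intro x _ hx
    have hxN : N ≤ (x : ℕ) := by
      by_contra hlt
      push_neg at hlt
      exact hx (Finset.mem_map.mpr ⟨⟨(x : ℕ), hlt⟩, Finset.mem_univ _, rfl⟩)
    rw [restrict_move_high h σ x hxN, sub_self, mul_zero]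
  rw [← Finset.sum_subset (Finset.subset_univ _) hvanish, Finset.sum_map]
  rw [toomGen_eq' lamP lamM]
  refine Finset.sum_congr rfl fun x _ => ?_
  simp only [Function.Embedding.coeFn_mk, restrict_move h σ x]
  have h2 : (σ (Fin.castLE h x)) = restrictConf h σ x := rfl
  rw [h2]
  have h3 : (if restrictConf h σ = η' then (1:ℝ) else 0)
      = (if η' = restrictConf h σ then (1:ℝ) else 0) := if_congr eq_comm rfl rfl
  rw [h3]

/-- The pushforward of a stationary distribution is stationary. -/
lemma pushforward_stationary (lamP lamM : ℝ) {N M : ℕ} (h : N ≤ M) (πM : Conf M → ℝ)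
    (hπ : ToomIsStationary lamP lamM M πM) :
    ToomIsStationary lamP lamM N
      (fun η => ∑ σ ∈ Finset.univ.filter (fun σ : Conf M => restrictConf h σ = η), πM σ) := by
  obtain ⟨hpos, hsum1, hstat⟩ := hπ
  refine ⟨fun η => Finset.sum_nonneg fun σ _ => hpos σ, ?_, ?_⟩
  · rw [← hsum1]
    exact Finset.sum_fiberwise_of_maps_to (fun σ _ => Finset.mem_univ _) πM
  · intro η'
    have key : ∀ η : Conf N,
        (∑ σ ∈ Finset.univ.filter (fun σ : Conf M => restrictConf h σ = η), πM σ)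
            * toomGen lamP lamM N η η'
        = ∑ σ ∈ Finset.univ.filter (fun σ : Conf M => restrictConf h σ = η),
            πM σ * toomGen lamP lamM N (restrictConf h σ) η' := by
      intro η
      rw [Finset.sum_mul]
      refine Finset.sum_congr rfl fun σ hσ => ?_
      rw [(Finset.mem_filter.mp hσ).2]
    rw [Finset.sum_congr rfl (fun η _ => key η),
      Finset.sum_fiberwise_of_maps_to (fun σ _ => Finset.mem_univ _)
        (fun σ => πM σ * toomGen lamP lamM N (restrictConf h σ) η')]
    have : ∀ σ : Conf M, πM σ * toomGen lamP lamM N (restrictConf h σ) η'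
        = ∑ σ' ∈ Finset.univ.filter (fun σ' : Conf M => restrictConf h σ' = η'),
            πM σ * toomGen lamP lamM M σ σ' := by
      intro σ
      rw [← Finset.mul_sum, lump]
    rw [Finset.sum_congr rfl (fun σ _ => this σ), Finset.sum_comm]
    exact Finset.sum_eq_zero fun σ' _ => hstat σ'

end ToomAux
namespace ToomAux
open Finset

noncomputable def PK (lamP lamM : ℝ) (N : ℕ) (σ σ' : Conf N) : ℝ :=
  (if σ = σ' then 1 else 0) + (1 / (2 * (N : ℝ))) * toomGen lamP lamM N σ σ'

noncomputable def PKpow (lamP lamM : ℝ) (N : ℕ) : ℕ → Conf N → Conf N → ℝ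
  | 0 => fun σ σ' => if σ = σ' then 1 else 0
  | (k+1) => fun σ σ' => ∑ τ, PKpow lamP lamM N k σ τ * PK lamP lamM N τ σ'

variable {lamP lamM : ℝ} {N : ℕ}

lemma toomGen_diag (lamP lamM : ℝ) (σ : Conf N) :
    toomGen lamP lamM N σ σ = -∑ x : Fin N, rate lamP lamM (σ x) := by
  rw [toomGen_eq, if_pos rfl]
  have : ∀ x : Fin N, rate lamP lamM (σ x) * (if move σ x = σ then (1:ℝ) else 0) = 0 :=
    fun x => by rw [if_neg (move_ne σ x), mul_zero]
  rw [Finset.sum_congr rfl (fun x _ => this x), Finset.sum_const_zero, zero_sub]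

lemma jumpRate_nonneg (hP : 0 < lamP) (hM : 0 < lamM) (σ τ : Conf N) :
    0 ≤ jumpRate lamP lamM σ τ :=
  Finset.sum_nonneg fun x _ => rate_nonneg hP hM _

lemma eps_pos (hN : 1 ≤ N) : (0:ℝ) < 1 / (2 * (N : ℝ)) := by
  have : (0:ℝ) < (N : ℝ) := by exact_mod_cast Nat.lt_of_lt_of_le Nat.zero_lt_one hN
  positivity

lemma PK_diag_pos (hP : 0 < lamP) (hM : 0 < lamM) (hsum : lamP + lamM = 1) (hN : 1 ≤ N)
    (σ : Conf N) : 0 < PK lamP lamM N σ σ := by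
  unfold PK
  rw [if_pos rfl, toomGen_diag]
  have hNpos : (0:ℝ) < (N : ℝ) := by exact_mod_cast Nat.lt_of_lt_of_le Nat.zero_lt_one hN
  have hb : ∑ x : Fin N, rate lamP lamM (σ x) ≤ (N : ℝ) := by
    calc ∑ x : Fin N, rate lamP lamM (σ x) ≤ ∑ _x : Fin N, (1:ℝ) :=
          Finset.sum_le_sum fun x _ => rate_le_one hP hM hsum _
      _ = (N : ℝ) := by simp
  have key : (1 / (2 * (N : ℝ))) * (∑ x : Fin N, rate lamP lamM (σ x)) ≤ 1/2 := by
    rw [div_mul_eq_mul_div, one_mul, div_le_div_iff₀ (by positivity) (by norm_num)]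
    nlinarith
  nlinarith

lemma PK_nonneg (hP : 0 < lamP) (hM : 0 < lamM) (hsum : lamP + lamM = 1) (hN : 1 ≤ N)
    (σ σ' : Conf N) : 0 ≤ PK lamP lamM N σ σ' := by
  by_cases h : σ = σ'
  · subst h; exact (PK_diag_pos hP hM hsum hN σ).le
  · unfold PK
    rw [if_neg h]
    have : toomGen lamP lamM N σ σ' = jumpRate lamP lamM σ σ' := by
      unfold toomGen; rw [if_neg (fun he => h he.symm)]
    rw [this]
    have := jumpRate_nonneg hP hM σ σ'
    have := eps_pos (N := N) hN
    positivity

lemma PK_move_pos (hP : 0 < lamP) (hM : 0 < lamM) (hN : 1 ≤ N) (σ : Conf N) (x : Fin N) :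
    0 < PK lamP lamM N σ (move σ x) := by
  unfold PK
  rw [if_neg (fun he => move_ne σ x he.symm), zero_add]
  have h1 : toomGen lamP lamM N σ (move σ x) = jumpRate lamP lamM σ (move σ x) := by
    unfold toomGen; rw [if_neg (move_ne σ x)]
  rw [h1]
  have h2 : rate lamP lamM (σ x) ≤ jumpRate lamP lamM σ (move σ x) := by
    refine Finset.single_le_sum (f := fun y => rate lamP lamM (σ y))
      (fun y _ => rate_nonneg hP hM _) ?_
    simp
  have h3 := rate_pos hP hM (σ x)
  exact mul_pos (eps_pos hN) (lt_of_lt_of_le h3 h2)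

lemma PK_row_sum (σ : Conf N) : ∑ σ' : Conf N, PK lamP lamM N σ σ' = 1 := by
  unfold PK
  rw [Finset.sum_add_distrib, ← Finset.mul_sum, toomGen_row_sum, mul_zero, add_zero]
  simp

lemma PKpow_one (σ σ' : Conf N) : PKpow lamP lamM N 1 σ σ' = PK lamP lamM N σ σ' := by
  show ∑ τ, (if σ = τ then (1:ℝ) else 0) * PK lamP lamM N τ σ' = _
  have : ∀ τ, (if σ = τ then (1:ℝ) else 0) * PK lamP lamM N τ σ'
      = if σ = τ then PK lamP lamM N τ σ' else 0 := fun τ => by split <;> simp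
  rw [Finset.sum_congr rfl (fun τ _ => this τ), Finset.sum_ite_eq]
  simp

lemma PKpow_nonneg (hP : 0 < lamP) (hM : 0 < lamM) (hsum : lamP + lamM = 1) (hN : 1 ≤ N)
    (k : ℕ) (σ σ' : Conf N) : 0 ≤ PKpow lamP lamM N k σ σ' := by
  induction k generalizing σ σ' with
  | zero => unfold PKpow; split <;> norm_num
  | succ k ih =>
      exact Finset.sum_nonneg fun τ _ => mul_nonneg (ih σ τ) (PK_nonneg hP hM hsum hN τ σ')

lemma PKpow_add (a b : ℕ) (σ σ' : Conf N) :
    PKpow lamP lamM N (a + b) σ σ' = ∑ τ, PKpow lamP lamM N a σ τ * PKpow lamP lamM N b τ σ' := by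
  induction b generalizing σ' with
  | zero =>
      have : ∀ τ, PKpow lamP lamM N a σ τ * PKpow lamP lamM N 0 τ σ'
          = if τ = σ' then PKpow lamP lamM N a σ τ else 0 := fun τ => by
        show PKpow lamP lamM N a σ τ * (if τ = σ' then (1:ℝ) else 0) = _
        split <;> simp
      rw [Nat.add_zero, Finset.sum_congr rfl (fun τ _ => this τ), Finset.sum_ite_eq']
      simp
  | succ b ih =>
      show ∑ ρ, PKpow lamP lamM N (a+b) σ ρ * PK lamP lamM N ρ σ' = _
      have step : ∀ ρ, PKpow lamP lamM N (a+b) σ ρ * PK lamP lamM N ρ σ'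
          = ∑ τ, PKpow lamP lamM N a σ τ * PKpow lamP lamM N b τ ρ * PK lamP lamM N ρ σ' :=
        fun ρ => by rw [ih, Finset.sum_mul]
      rw [Finset.sum_congr rfl (fun ρ _ => step ρ), Finset.sum_comm]
      refine Finset.sum_congr rfl fun τ _ => ?_
      show _ = PKpow lamP lamM N a σ τ * ∑ ρ, PKpow lamP lamM N b τ ρ * PK lamP lamM N ρ σ'
      rw [Finset.mul_sum]
      exact Finset.sum_congr rfl fun ρ _ => by ring

lemma PKpow_chain (hP : 0 < lamP) (hM : 0 < lamM) (hsum : lamP + lamM = 1) (hN : 1 ≤ N)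
    {a b : ℕ} {σ τ σ' : Conf N} (ha : 0 < PKpow lamP lamM N a σ τ)
    (hb : 0 < PKpow lamP lamM N b τ σ') : 0 < PKpow lamP lamM N (a + b) σ σ' := by
  rw [PKpow_add]
  refine Finset.sum_pos' (fun ρ _ => mul_nonneg (PKpow_nonneg hP hM hsum hN a σ ρ)
    (PKpow_nonneg hP hM hsum hN b ρ σ')) ⟨τ, Finset.mem_univ τ, mul_pos ha hb⟩

end ToomAux
namespace ToomAux
open Finset

def allTrue (N : ℕ) : Conf N := fun _ => true

def wtF {N : ℕ} (σ : Conf N) (y : Fin N) : ℕ := if σ y then 0 else N - (y : ℕ)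

def wt {N : ℕ} (σ : Conf N) : ℕ := ∑ y : Fin N, wtF σ y

def nf {N : ℕ} (σ : Conf N) : ℕ := (Finset.univ.filter (fun y => σ y = false)).card

variable {lamP lamM : ℝ} {N : ℕ}

lemma wt_eq_zero {σ : Conf N} (h : wt σ = 0) : σ = allTrue N := by
  funext y
  by_contra hy
  have hy' : σ y = false := by
    cases hσ : σ y
    · rfl
    · exact absurd hσ hy
  have h1 : wtF σ y ≤ 0 := h ▸ Finset.single_le_sum (f := wtF σ) (fun _ _ => Nat.zero_le _)
    (Finset.mem_univ y)
  have h2 : wtF σ y = N - (y : ℕ) := by unfold wtF; rw [hy']; simp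
  have := y.isLt
  omega

lemma exists_false_of_ne_allTrue {σ : Conf N} (h : σ ≠ allTrue N) :
    (Finset.univ.filter (fun y => σ y = false)).Nonempty := by
  by_contra hne
  refine h (funext fun y => ?_)
  cases hσ : σ y
  · exact absurd ⟨y, Finset.mem_filter.mpr ⟨Finset.mem_univ y, hσ⟩⟩ hne
  · rfl

/-- From any configuration one reaches `allTrue` in exactly `wt σ` steps. -/
lemma reach_top (hP : 0 < lamP) (hM : 0 < lamM) (hsum : lamP + lamM = 1) (hN : 1 ≤ N) :
    ∀ (n : ℕ) (σ : Conf N), wt σ = n → 0 < PKpow lamP lamM N n σ (allTrue N) := by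
  intro n
  induction n using Nat.strong_induction_on with
  | _ n ih =>
    intro σ hwt
    rcases Nat.eq_zero_or_pos n with hn | hn
    · subst hn
      rw [wt_eq_zero hwt]
      show (0:ℝ) < if allTrue N = allTrue N then 1 else 0
      rw [if_pos rfl]; norm_num
    · have hσne : σ ≠ allTrue N := by
        intro he; subst he
        have : wt (allTrue N) = 0 := by
          unfold wt wtF allTrue; simp
        omega
      obtain hs := exists_false_of_ne_allTrue hσne
      set s := Finset.univ.filter (fun y => σ y = false) with hsdef
      set x := s.max' hs with hx
      have hxs : x ∈ s := Finset.max'_mem s hs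
      have hσx : σ x = false := (Finset.mem_filter.mp hxs).2
      have hmax : ∀ y : Fin N, x < y → σ y = true := by
        intro y hy
        cases hσ : σ y
        · have : y ∈ s := Finset.mem_filter.mpr ⟨Finset.mem_univ y, hσ⟩
          exact absurd (Finset.le_max' s y this) (not_le.mpr hy)
        · rfl
      -- identify the move
      have hxlt : (x : ℕ) < N := x.isLt
      by_cases hedge : (x : ℕ) + 1 = N
      · -- x is the last site; move flips x alone
        have hopp : ¬ (oppRight σ x).Nonempty := by
          rintro ⟨y, hy⟩
          have := (mem_oppRight.mp hy).1
          have := y.isLt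
          rw [Fin.lt_def] at *
          omega
        have hmove : move σ x = Function.update σ x true := by
          unfold move
          rw [dif_neg hopp, hσx]
          rfl
        -- weight decreases by one
        have hwF : wtF (Function.update σ x true) = Function.update (wtF σ) x 0 := by
          funext y
          by_cases hyx : y = x
          · subst hyx; unfold wtF; simp
          · unfold wtF
            rw [Function.update_of_ne hyx, Function.update_of_ne hyx]
        have hsum1 : wt σ = wtF σ x + ∑ y ∈ Finset.univ.erase x, wtF σ y :=
          (Finset.add_sum_erase _ (wtF σ) (Finset.mem_univ x)).symm
        have hsum2 : wt (Function.update σ x true)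
            = 0 + ∑ y ∈ Finset.univ.erase x, wtF σ y := by
          unfold wt
          rw [hwF, ← Finset.add_sum_erase _ _ (Finset.mem_univ x), Function.update_self]
          congr 1
          exact Finset.sum_congr rfl fun y hy =>
            Function.update_of_ne (Finset.mem_erase.mp hy).1 _ _
        have hwx : wtF σ x = 1 := by
          unfold wtF; rw [hσx]; simp; omega
        have hwt' : wt (move σ x) = n - 1 := by
          rw [hmove]; omega
        have h1 : 0 < PKpow lamP lamM N 1 σ (move σ x) := by
          rw [PKpow_one]; exact PK_move_pos hP hM hN σ x
        have h2 := ih (n-1) (by omega) (move σ x) hwt'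
        have := PKpow_chain hP hM hsum hN h1 h2
        have he : 1 + (n - 1) = n := by omega
        rwa [he] at this
      · -- there is a site to the right; the move exchanges x and x+1
        have hlt : (x : ℕ) + 1 < N := by omega
        set x1 : Fin N := ⟨(x : ℕ) + 1, hlt⟩ with hx1
        have hxx1 : x < x1 := by rw [Fin.lt_def]; simp [hx1]
        have hσx1 : σ x1 = true := hmax x1 hxx1
        have hx1mem : x1 ∈ oppRight σ x := mem_oppRight.mpr ⟨hxx1, by rw [hσx1, hσx]; simp⟩
        have hopp : (oppRight σ x).Nonempty := ⟨x1, hx1mem⟩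
        have hmin : (oppRight σ x).min' hopp = x1 := by
          refine le_antisymm (Finset.min'_le _ _ hx1mem) ?_
          have hm := Finset.min'_mem _ hopp
          have := (mem_oppRight.mp hm).1
          rw [Fin.le_def, Fin.lt_def] at *
          simp only [hx1]
          omega
        have hmove : move σ x = Function.update (Function.update σ x true) x1 false := by
          unfold move
          rw [dif_pos hopp, hmin, hσx, hσx1]
          rfl
        set τ := Function.update (Function.update σ x true) x1 false with hτ
        have hτx : τ x = true := by
          rw [hτ, Function.update_of_ne (Fin.ne_of_lt hxx1), Function.update_self]
        have hτx1 : τ x1 = false := by rw [hτ, Function.update_self]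
        have hτother : ∀ y : Fin N, y ≠ x → y ≠ x1 → τ y = σ y := by
          intro y h1 h2
          rw [hτ, Function.update_of_ne h2, Function.update_of_ne h1]
        -- weight computation
        have hx1x : x1 ≠ x := (Fin.ne_of_lt hxx1).symm
        have dσ : wt σ = wtF σ x + (wtF σ x1 + ∑ y ∈ (Finset.univ.erase x).erase x1, wtF σ y) := by
          rw [Finset.add_sum_erase _ (wtF σ) (Finset.mem_erase.mpr ⟨hx1x, Finset.mem_univ x1⟩),
            Finset.add_sum_erase _ (wtF σ) (Finset.mem_univ x)]
          rfl
        have dτ : wt τ = wtF τ x + (wtF τ x1 + ∑ y ∈ (Finset.univ.erase x).erase x1, wtF τ y) := by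
          rw [Finset.add_sum_erase _ (wtF τ) (Finset.mem_erase.mpr ⟨hx1x, Finset.mem_univ x1⟩),
            Finset.add_sum_erase _ (wtF τ) (Finset.mem_univ x)]
          rfl
        have hrest : ∑ y ∈ (Finset.univ.erase x).erase x1, wtF τ y
            = ∑ y ∈ (Finset.univ.erase x).erase x1, wtF σ y := by
          refine Finset.sum_congr rfl fun y hy => ?_
          obtain ⟨hy1, hy2⟩ := Finset.mem_erase.mp hy
          obtain ⟨hy2', _⟩ := Finset.mem_erase.mp hy2
          unfold wtF
          rw [hτother y hy2' hy1]
        have e1 : wtF σ x = N - (x : ℕ) := by unfold wtF; rw [hσx]; simp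
        have e2 : wtF σ x1 = 0 := by unfold wtF; rw [hσx1]; simp
        have e3 : wtF τ x = 0 := by unfold wtF; rw [hτx]; simp
        have e4 : wtF τ x1 = N - ((x : ℕ) + 1) := by
          unfold wtF; rw [hτx1]; simp [hx1]
        have hwt' : wt (move σ x) = n - 1 := by
          rw [hmove]
          omega
        have h1 : 0 < PKpow lamP lamM N 1 σ (move σ x) := by
          rw [PKpow_one]; exact PK_move_pos hP hM hN σ x
        have h2 := ih (n-1) (by omega) (move σ x) hwt'
        have := PKpow_chain hP hM hsum hN h1 h2
        have he : 1 + (n - 1) = n := by omega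
        rwa [he] at this

end ToomAux
namespace ToomAux
open Finset

variable {lamP lamM : ℝ} {N : ℕ}

/-- `allTrue` reaches any configuration in exactly `nf σ'` steps. -/
lemma reach_from_top (hP : 0 < lamP) (hM : 0 < lamM) (hsum : lamP + lamM = 1) (hN : 1 ≤ N) :
    ∀ (k : ℕ) (σ' : Conf N), nf σ' = k → 0 < PKpow lamP lamM N k (allTrue N) σ' := by
  intro k
  induction k with
  | zero =>
    intro σ' hnf
    have hσ' : σ' = allTrue N := by
      funext y
      cases hσ : σ' y
      · exfalso
        have hy : y ∈ Finset.univ.filter (fun z => σ' z = false) :=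
          Finset.mem_filter.mpr ⟨Finset.mem_univ y, hσ⟩
        have := Finset.card_pos.mpr ⟨y, hy⟩
        unfold nf at hnf
        omega
      · rfl
    subst hσ'
    show (0:ℝ) < if allTrue N = allTrue N then 1 else 0
    rw [if_pos rfl]; norm_num
  | succ k ih =>
    intro σ' hnf
    have hs : (Finset.univ.filter (fun z => σ' z = false)).Nonempty := by
      apply Finset.card_pos.mp
      unfold nf at hnf
      omega
    set s := Finset.univ.filter (fun z => σ' z = false) with hsdef
    set x := s.max' hs with hx
    have hxs : x ∈ s := Finset.max'_mem s hs
    have hσx : σ' x = false := (Finset.mem_filter.mp hxs).2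
    have hmax : ∀ y : Fin N, x < y → σ' y = true := by
      intro y hy
      cases hσ : σ' y
      · have : y ∈ s := Finset.mem_filter.mpr ⟨Finset.mem_univ y, hσ⟩
        exact absurd (Finset.le_max' s y this) (not_le.mpr hy)
      · rfl
    set τ := Function.update σ' x true with hτ
    have hτx : τ x = true := by rw [hτ, Function.update_self]
    have hτother : ∀ y : Fin N, y ≠ x → τ y = σ' y :=
      fun y hy => by rw [hτ, Function.update_of_ne hy]
    have hfilter : Finset.univ.filter (fun z => τ z = false) = s.erase x := by
      ext y
      rw [Finset.mem_filter, Finset.mem_erase, hsdef, Finset.mem_filter]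
      constructor
      · rintro ⟨_, hy⟩
        have hyx : y ≠ x := fun he => by rw [he, hτx] at hy; exact Bool.noConfusion hy
        exact ⟨hyx, Finset.mem_univ y, by rw [← hτother y hyx]; exact hy⟩
      · rintro ⟨hyx, _, hy⟩
        exact ⟨Finset.mem_univ y, by rw [hτother y hyx]; exact hy⟩
    have hnfτ : nf τ = k := by
      have hcard : s.card = k + 1 := by
        unfold nf at hnf
        rw [← hsdef] at hnf
        exact hnf
      unfold nf
      rw [hfilter, Finset.card_erase_of_mem hxs, hcard]
      omega
    have hopp : ¬ (oppRight τ x).Nonempty := by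
      rintro ⟨y, hy⟩
      obtain ⟨hxy, hneq⟩ := mem_oppRight.mp hy
      have hyx : y ≠ x := (Fin.ne_of_lt hxy).symm
      rw [hτx, hτother y hyx] at hneq
      have : σ' y = false := by
        cases hσ : σ' y
        · rfl
        · exact absurd hσ hneq
      have : y ∈ s := Finset.mem_filter.mpr ⟨Finset.mem_univ y, this⟩
      exact absurd (Finset.le_max' s y this) (not_le.mpr hxy)
    have hmove : move τ x = σ' := by
      unfold move
      rw [dif_neg hopp]
      funext y
      by_cases hy : y = x
      · subst hy
        rw [Function.update_self, hτx, hσx]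
        rfl
      · rw [Function.update_of_ne hy, hτother y hy]
    have h1 := ih τ hnfτ
    have h2 : 0 < PKpow lamP lamM N 1 τ σ' := by
      rw [PKpow_one, ← hmove]
      exact PK_move_pos hP hM hN τ x
    exact PKpow_chain hP hM hsum hN h1 h2

lemma top_loop (hP : 0 < lamP) (hM : 0 < lamM) (hsum : lamP + lamM = 1) (hN : 1 ≤ N) :
    ∀ j : ℕ, 0 < PKpow lamP lamM N j (allTrue N) (allTrue N) := by
  intro j
  induction j with
  | zero =>
    show (0:ℝ) < if allTrue N = allTrue N then 1 else 0
    rw [if_pos rfl]; norm_num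
  | succ j ih =>
    have h2 : 0 < PKpow lamP lamM N 1 (allTrue N) (allTrue N) := by
      rw [PKpow_one]; exact PK_diag_pos hP hM hsum hN _
    exact PKpow_chain hP hM hsum hN ih h2

lemma wt_le (σ : Conf N) : wt σ ≤ N * N := by
  calc wt σ ≤ ∑ _y : Fin N, N :=
        Finset.sum_le_sum fun y _ => by unfold wtF; split <;> omega
    _ = N * N := by simp [Finset.sum_const, mul_comm]

lemma nf_le (σ : Conf N) : nf σ ≤ N := by
  have := Finset.card_filter_le Finset.univ (fun z => σ z = false)
  simpa [nf] using this

/-- All entries of the `(N²+N)`-th power are positive. -/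
lemma reach_all (hP : 0 < lamP) (hM : 0 < lamM) (hsum : lamP + lamM = 1) (hN : 1 ≤ N)
    (σ σ' : Conf N) : 0 < PKpow lamP lamM N (N * N + N) σ σ' := by
  have h1 := reach_top hP hM hsum hN (wt σ) σ rfl
  have h3 := reach_from_top hP hM hsum hN (nf σ') σ' rfl
  have h2 := top_loop hP hM hsum hN (N * N + N - wt σ - nf σ')
  have hchain := PKpow_chain hP hM hsum hN h1 (PKpow_chain hP hM hsum hN h2 h3)
  have ha := wt_le σ
  have hc := nf_le σ'
  have he : wt σ + (N * N + N - wt σ - nf σ' + nf σ') = N * N + N := by omega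
  rwa [he] at hchain

lemma stationary_fixed {π : Conf N → ℝ} (hπ : ToomIsStationary lamP lamM N π) (σ' : Conf N) :
    ∑ σ, π σ * PK lamP lamM N σ σ' = π σ' := by
  unfold PK
  have : ∀ σ : Conf N, π σ * ((if σ = σ' then (1:ℝ) else 0)
        + (1 / (2 * (N : ℝ))) * toomGen lamP lamM N σ σ')
      = (if σ = σ' then π σ else 0) + (1 / (2 * (N : ℝ))) * (π σ * toomGen lamP lamM N σ σ') :=
    fun σ => by split <;> ring
  rw [Finset.sum_congr rfl (fun σ _ => this σ), Finset.sum_add_distrib, ← Finset.mul_sum,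
    hπ.2.2 σ', mul_zero, add_zero, Finset.sum_ite_eq']
  simp

lemma stationary_fixed_pow {π : Conf N → ℝ} (hπ : ToomIsStationary lamP lamM N π) (k : ℕ)
    (σ' : Conf N) : ∑ σ, π σ * PKpow lamP lamM N k σ σ' = π σ' := by
  induction k generalizing σ' with
  | zero =>
    show ∑ σ, π σ * (if σ = σ' then (1:ℝ) else 0) = π σ'
    have : ∀ σ : Conf N, π σ * (if σ = σ' then (1:ℝ) else 0) = if σ = σ' then π σ else 0 :=
      fun σ => by split <;> simp
    rw [Finset.sum_congr rfl (fun σ _ => this σ), Finset.sum_ite_eq']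
    simp
  | succ k ih =>
    show ∑ σ, π σ * ∑ τ, PKpow lamP lamM N k σ τ * PK lamP lamM N τ σ' = π σ'
    have : ∀ σ : Conf N, π σ * ∑ τ, PKpow lamP lamM N k σ τ * PK lamP lamM N τ σ'
        = ∑ τ, (π σ * PKpow lamP lamM N k σ τ) * PK lamP lamM N τ σ' := by
      intro σ
      rw [Finset.mul_sum]
      exact Finset.sum_congr rfl fun τ _ => by ring
    rw [Finset.sum_congr rfl (fun σ _ => this σ), Finset.sum_comm]
    have : ∀ τ : Conf N, ∑ σ, (π σ * PKpow lamP lamM N k σ τ) * PK lamP lamM N τ σ'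
        = π τ * PK lamP lamM N τ σ' := by
      intro τ
      rw [← Finset.sum_mul, ih τ]
    rw [Finset.sum_congr rfl (fun τ _ => this τ)]
    exact stationary_fixed hπ σ'

lemma stationary_pos (hP : 0 < lamP) (hM : 0 < lamM) (hsum : lamP + lamM = 1) (hN : 1 ≤ N)
    {π : Conf N → ℝ} (hπ : ToomIsStationary lamP lamM N π) (σ' : Conf N) : 0 < π σ' := by
  obtain ⟨σs, _, hσs⟩ := Finset.exists_ne_zero_of_sum_ne_zero
    (by rw [hπ.2.1]; norm_num : ∑ σ : Conf N, π σ ≠ 0)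
  have hσspos : 0 < π σs := lt_of_le_of_ne (hπ.1 σs) (Ne.symm hσs)
  have hfix := stationary_fixed_pow hπ (N * N + N) σ'
  have hterm : 0 < π σs * PKpow lamP lamM N (N * N + N) σs σ' :=
    mul_pos hσspos (reach_all hP hM hsum hN σs σ')
  have hle : π σs * PKpow lamP lamM N (N * N + N) σs σ'
      ≤ ∑ σ, π σ * PKpow lamP lamM N (N * N + N) σ σ' :=
    Finset.single_le_sum (fun σ _ => mul_nonneg (hπ.1 σ)
      (PKpow_nonneg hP hM hsum hN _ σ σ')) (Finset.mem_univ σs)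
  rw [hfix] at hle
  exact lt_of_lt_of_le hterm hle

/-- Uniqueness of the stationary distribution. -/
theorem stationary_unique (hP : 0 < lamP) (hM : 0 < lamM) (hsum : lamP + lamM = 1)
    (hN : 1 ≤ N) (π μ : Conf N → ℝ) (hπ : ToomIsStationary lamP lamM N π)
    (hμ : ToomIsStationary lamP lamM N μ) : ∀ σ, π σ = μ σ := by
  have hμpos : ∀ σ, 0 < μ σ := stationary_pos hP hM hsum hN hμ
  obtain ⟨σ₀, _, hmin⟩ := Finset.exists_min_image Finset.univ (fun σ => π σ / μ σ)
    Finset.univ_nonempty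
  set c := π σ₀ / μ σ₀ with hc
  have hcle : ∀ σ : Conf N, c * μ σ ≤ π σ := by
    intro σ
    have h1 : c ≤ π σ / μ σ := hmin σ (Finset.mem_univ σ)
    rwa [le_div_iff₀ (hμpos σ)] at h1
  have hfixπ := stationary_fixed_pow hπ (N * N + N) σ₀
  have hfixμ := stationary_fixed_pow hμ (N * N + N) σ₀
  have hsum0 : ∑ σ, (π σ - c * μ σ) * PKpow lamP lamM N (N * N + N) σ σ₀ = 0 := by
    have expand : ∀ σ : Conf N, (π σ - c * μ σ) * PKpow lamP lamM N (N * N + N) σ σ₀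
        = π σ * PKpow lamP lamM N (N * N + N) σ σ₀
          - c * (μ σ * PKpow lamP lamM N (N * N + N) σ σ₀) := fun σ => by ring
    rw [Finset.sum_congr rfl (fun σ _ => expand σ), Finset.sum_sub_distrib, hfixπ,
      ← Finset.mul_sum, hfixμ, hc, div_mul_cancel₀ _ (hμpos σ₀).ne', sub_self]
  have hall : ∀ σ ∈ Finset.univ,
      (π σ - c * μ σ) * PKpow lamP lamM N (N * N + N) σ σ₀ = 0 := by
    rw [← Finset.sum_eq_zero_iff_of_nonneg
      (fun σ _ => mul_nonneg (by linarith [hcle σ]) (PKpow_nonneg hP hM hsum hN _ σ σ₀))]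
    exact hsum0
  have heq : ∀ σ : Conf N, π σ = c * μ σ := by
    intro σ
    have h0 := hall σ (Finset.mem_univ σ)
    rcases mul_eq_zero.mp h0 with h | h
    · linarith
    · exact absurd h (reach_all hP hM hsum hN σ σ₀).ne'
  have hc1 : c = 1 := by
    have h1 : ∑ σ, π σ = ∑ σ, c * μ σ := Finset.sum_congr rfl fun σ _ => heq σ
    rw [hπ.2.1, ← Finset.mul_sum, hμ.2.1, mul_one] at h1
    exact h1.symm
  intro σ
  rw [heq σ, hc1, one_mul]

end ToomAux

/-- The family of stationary distributions is consistent: the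
pushforward of `π_M` under the restriction to the first `N` sites equals `π_N`. -/
theorem toom_stationary_consistent (lamP lamM : ℝ) (hP : 0 < lamP) (hM : 0 < lamM)
    (hsum : lamP + lamM = 1) (N M : ℕ) (hN : 1 ≤ N) (hNM : N ≤ M)
    (πM : Conf M → ℝ) (hπM : ToomIsStationary lamP lamM M πM)
    (πN : Conf N → ℝ) (hπN : ToomIsStationary lamP lamM N πN) :
    ∀ η : Conf N,
      ∑ σ ∈ Finset.univ.filter (fun σ : Conf M => restrictConf hNM σ = η), πM σ = πN η := by
  intro η
  have hν := ToomAux.pushforward_stationary lamP lamM hNM πM hπM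
  exact ToomAux.stationary_unique hP hM hsum hN _ πN hν hπN η
end

section
/- Fix rates λ₊, λ₋ > 0 with λ₊ + λ₋ = 1, and for each N ≥ 1 let π_N be the unique stationary distribution of the Toom-interface generator Q_N. There exists a unique probability measure π_∞ on the space {−1,1}^{ℕ≥1} (equipped with the product σ-algebra) such that for every N ≥ 1 and every ξ ∈ Ω_N, π_∞({σ : σ(x) = ξ(x) for all 1 ≤ x ≤ N}) = π_N(ξ). -/
open Finset

/-- A stationary distribution for `Q_N`. -/
noncomputable def IsToomStationary (lamP lamM : ℝ) (N : ℕ) (π : Conf N → ℝ) : Prop :=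
  (∀ σ, 0 ≤ π σ) ∧ (∑ σ, π σ = 1) ∧ (∀ σ', ∑ σ, π σ * toomGen lamP lamM N σ σ' = 0)



lemma lt_of_mem_oppRight {N : ℕ} {σ : Conf N} {x y : Fin N} (h : y ∈ oppRight σ x) : x < y :=
  (mem_oppRight.mp h).1

lemma move_apply_of_ne {N : ℕ} (σ : Conf N) (x : Fin N) {y : Fin N}
    (h1 : y ≠ x) (h2 : ∀ h : (oppRight σ x).Nonempty, y ≠ (oppRight σ x).min' h) :
    move σ x y = σ y := by
  unfold move
  split
  · rename_i h
    rw [Function.update_of_ne (h2 h), Function.update_of_ne h1]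
  · rw [Function.update_of_ne h1]

lemma move_apply_of_lt {N : ℕ} (σ : Conf N) {x y : Fin N} (h : y < x) :
    move σ x y = σ y := by
  refine move_apply_of_ne σ x h.ne ?_
  intro hne
  exact (h.trans (lt_of_mem_oppRight ((oppRight σ x).min'_mem hne))).ne

/-! ### Reachability -/

/-- One-step move relation. -/
def MoveStep {N : ℕ} (σ τ : Conf N) : Prop := ∃ x, move σ x = τ

lemma reach_aux {N : ℕ} (j : ℕ) (σ τ : Conf N)
    (h : ∀ y : Fin N, (y : ℕ) < N - j → σ y = τ y) :
    Relation.ReflTransGen (MoveStep (N := N)) σ τ := by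
  induction j generalizing σ with
  | zero =>
    have : σ = τ := funext fun y => h y (by simpa using y.2)
    exact this ▸ Relation.ReflTransGen.refl
  | succ j ih =>
    by_cases hall : ∀ y : Fin N, (y : ℕ) < N - j → σ y = τ y
    · exact ih σ hall
    · push_neg at hall
      obtain ⟨y, hy, hne⟩ := hall
      have hylb : N - (j+1) ≤ (y : ℕ) := by
        by_contra hc
        push_neg at hc
        exact hne (h y hc)
      have hyval : (y : ℕ) = N - (j+1) := by omega
      -- apply the move at y
      refine Relation.ReflTransGen.head ⟨y, rfl⟩ (ih (move σ y) ?_)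
      intro z hz
      rcases lt_trichotomy z y with hlt | heq | hgt
      · rw [move_apply_of_lt σ hlt]
        exact h z (by omega)
      · subst heq
        rw [move_apply_self]
        revert hne
        cases σ z <;> cases τ z <;> simp
      · exfalso
        have : (y : ℕ) < (z : ℕ) := hgt
        omega

lemma reach {N : ℕ} (σ τ : Conf N) : Relation.ReflTransGen (MoveStep (N := N)) σ τ :=
  reach_aux N σ τ (fun y hy => by omega)

section Unique
variable {N : ℕ}
variable {lamP lamM : ℝ} (hP : 0 < lamP) (hM : 0 < lamM)

include hP hM in
lemma rate_pos (b : Bool) : 0 < rate lamP lamM b := by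
  cases b <;> simpa [rate]

/-- Total outflow rate from `σ`. -/
lemma sum_jumpRate_ne (σ : Conf N) :
    ∑ τ ∈ Finset.univ.filter (fun τ => τ ≠ σ), jumpRate lamP lamM σ τ
      = ∑ x, rate lamP lamM (σ x) := by
  unfold jumpRate
  rw [Finset.sum_fiberwise_of_maps_to (fun x _ => by
    simpa using move_ne σ x) (fun x => rate lamP lamM (σ x))]

/-- The balance equation for a stationary vector. -/
lemma balance {f : Conf N → ℝ}
    (hstat : ∀ σ', ∑ σ, f σ * toomGen lamP lamM N σ σ' = 0) (σ' : Conf N) :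
    f σ' * ∑ x, rate lamP lamM (σ' x)
      = ∑ σ ∈ Finset.univ.filter (fun σ => σ ≠ σ'), f σ * jumpRate lamP lamM σ σ' := by
  have h := hstat σ'
  rw [← Finset.sum_filter_add_sum_filter_not Finset.univ (fun σ => σ ≠ σ')] at h
  have h1 : Finset.univ.filter (fun σ => ¬ σ ≠ σ') = {σ'} := by
    ext τ; simp
  rw [h1, Finset.sum_singleton] at h
  have h2 : toomGen lamP lamM N σ' σ' = -∑ x, rate lamP lamM (σ' x) := by
    rw [toomGen, if_pos rfl, sum_jumpRate_ne]
  have h3 : ∑ σ ∈ Finset.univ.filter (fun σ => σ ≠ σ'), f σ * toomGen lamP lamM N σ σ'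
      = ∑ σ ∈ Finset.univ.filter (fun σ => σ ≠ σ'), f σ * jumpRate lamP lamM σ σ' := by
    refine Finset.sum_congr rfl fun σ hσ => ?_
    rw [Finset.mem_filter] at hσ
    rw [toomGen, if_neg (Ne.symm hσ.2)]
  rw [h3] at h
  rw [h2] at h
  linarith

include hP hM in
lemma pos_step (hN : 1 ≤ N) {f : Conf N → ℝ} (hpos : ∀ σ, 0 ≤ f σ)
    (hstat : ∀ σ', ∑ σ, f σ * toomGen lamP lamM N σ σ' = 0)
    {σ : Conf N} (hσ : 0 < f σ) (x : Fin N) : 0 < f (move σ x) := by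
  set σ' := move σ x with hσ'
  have hb := balance hstat σ'
  have hjr : rate lamP lamM (σ x) ≤ jumpRate lamP lamM σ σ' := by
    unfold jumpRate
    refine Finset.single_le_sum (f := fun y => rate lamP lamM (σ y))
      (fun y _ => (rate_pos hP hM _).le) ?_
    simp [hσ']
  have hterm : 0 < f σ * jumpRate lamP lamM σ σ' :=
    mul_pos hσ (lt_of_lt_of_le (rate_pos hP hM _) hjr)
  have hmem : σ ∈ Finset.univ.filter (fun τ => τ ≠ σ') := by
    simp only [Finset.mem_filter, Finset.mem_univ, true_and, hσ']
    exact fun h => move_ne σ x h.symm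
  have hrhs : 0 < ∑ τ ∈ Finset.univ.filter (fun τ => τ ≠ σ'), f τ * jumpRate lamP lamM τ σ' := by
    refine lt_of_lt_of_le hterm ?_
    refine Finset.single_le_sum (f := fun τ => f τ * jumpRate lamP lamM τ σ') ?_ hmem
    intro τ _
    refine mul_nonneg (hpos τ) ?_
    unfold jumpRate
    exact Finset.sum_nonneg fun y _ => (rate_pos hP hM _).le
  rw [← hb] at hrhs
  have hO : 0 ≤ ∑ y, rate lamP lamM (σ' y) :=
    Finset.sum_nonneg fun y _ => (rate_pos hP hM _).le
  nlinarith [hpos σ']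

include hP hM in
lemma pos_propagate (hN : 1 ≤ N) {f : Conf N → ℝ} (hpos : ∀ σ, 0 ≤ f σ)
    (hstat : ∀ σ', ∑ σ, f σ * toomGen lamP lamM N σ σ' = 0)
    {σ : Conf N} (hσ : 0 < f σ) (τ : Conf N) : 0 < f τ := by
  have h := reach σ τ
  induction h with
  | refl => exact hσ
  | tail _ hstep ih =>
    obtain ⟨x, hx⟩ := hstep
    exact hx ▸ pos_step hP hM hN hpos hstat ih x

include hP hM in
lemma stationary_pos (hN : 1 ≤ N) {π : Conf N → ℝ}
    (h : IsToomStationary lamP lamM N π) (σ : Conf N) : 0 < π σ := by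
  obtain ⟨hpos, hsum, hstat⟩ := h
  have : ∃ τ, 0 < π τ := by
    by_contra hc
    push_neg at hc
    have : ∀ τ, π τ = 0 := fun τ => le_antisymm (hc τ) (hpos τ)
    simp [this] at hsum
  obtain ⟨τ, hτ⟩ := this
  exact pos_propagate hP hM hN hpos hstat hτ σ

include hP hM in
lemma stationary_unique (hN : 1 ≤ N) {π π' : Conf N → ℝ}
    (h : IsToomStationary lamP lamM N π) (h' : IsToomStationary lamP lamM N π') : π = π' := by
  obtain ⟨hpos, hsum, hstat⟩ := h
  obtain ⟨hpos', hsum', hstat'⟩ := h'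
  have hπ'pos : ∀ σ, 0 < π' σ := stationary_pos hP hM hN ⟨hpos', hsum', hstat'⟩
  obtain ⟨σ₀, -, hmin⟩ := Finset.exists_min_image Finset.univ (fun σ => π σ / π' σ)
    Finset.univ_nonempty
  set c := π σ₀ / π' σ₀ with hc
  set f : Conf N → ℝ := fun σ => π σ - c * π' σ with hf
  have hfpos : ∀ σ, 0 ≤ f σ := by
    intro σ
    have h1 : c ≤ π σ / π' σ := hmin σ (Finset.mem_univ σ)
    have := (le_div_iff₀ (hπ'pos σ)).mp h1
    simp [hf]; linarith
  have hfstat : ∀ σ', ∑ σ, f σ * toomGen lamP lamM N σ σ' = 0 := by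
    intro σ'
    have : ∑ σ, f σ * toomGen lamP lamM N σ σ'
        = ∑ σ, π σ * toomGen lamP lamM N σ σ' - c * ∑ σ, π' σ * toomGen lamP lamM N σ σ' := by
      rw [Finset.mul_sum, ← Finset.sum_sub_distrib]
      refine Finset.sum_congr rfl fun σ _ => by simp [hf]; ring
    rw [this, hstat σ', hstat' σ']
    ring
  have hfσ₀ : f σ₀ = 0 := by
    simp [hf, hc, div_mul_cancel₀ _ (hπ'pos σ₀).ne']
  have hfzero : ∀ σ, f σ = 0 := by
    intro σ
    by_contra hne
    have hσpos : 0 < f σ := lt_of_le_of_ne (hfpos σ) (Ne.symm hne)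
    have := pos_propagate hP hM hN hfpos hfstat hσpos σ₀
    rw [hfσ₀] at this
    exact lt_irrefl _ this
  have hc1 : c = 1 := by
    have hs : ∑ σ, f σ = 0 := Finset.sum_eq_zero fun σ _ => hfzero σ
    have : ∑ σ, f σ = 1 - c := by
      simp [hf, Finset.sum_sub_distrib, hsum, ← Finset.mul_sum, hsum']
    rw [this] at hs
    linarith
  funext σ
  have := hfzero σ
  rw [hf] at this
  simp at this
  rw [hc1] at this
  linarith
end Unique

section Proj
variable {N : ℕ} {lamP lamM : ℝ}

/-! ### Projection: restriction to the first `N` coordinates is `Fin.init`. -/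

lemma oppRight_castSucc_mem {σ : Conf (N+1)} {x y : Fin N} :
    y.castSucc ∈ oppRight σ x.castSucc ↔ y ∈ oppRight (Fin.init σ) x := by
  simp only [mem_oppRight, Fin.castSucc_lt_castSucc_iff, Fin.init]

lemma move_init (σ : Conf (N+1)) (x : Fin N) :
    Fin.init (move σ x.castSucc) = move (Fin.init σ) x := by
  by_cases h : (oppRight (Fin.init σ) x).Nonempty
  · -- the minimum below is the castSucc of the minimum at level N
    set z := (oppRight (Fin.init σ) x).min' h with hz
    have hzmem : z.castSucc ∈ oppRight σ x.castSucc :=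
      oppRight_castSucc_mem.mpr ((oppRight (Fin.init σ) x).min'_mem h)
    have h' : (oppRight σ x.castSucc).Nonempty := ⟨_, hzmem⟩
    have hmin : (oppRight σ x.castSucc).min' h' = z.castSucc := by
      refine le_antisymm (Finset.min'_le _ _ hzmem) ?_
      refine Finset.le_min' _ _ _ fun w hw => ?_
      rcases Fin.eq_castSucc_or_eq_last w with ⟨w', rfl⟩ | rfl
      · exact Fin.castSucc_le_castSucc_iff.mpr
          (Finset.min'_le _ _ (oppRight_castSucc_mem.mp hw))
      · exact (Fin.castSucc_lt_last z).le
    rw [move, dif_pos h', hmin, move, dif_pos h]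
    have : σ z.castSucc = Fin.init σ z := rfl
    rw [this]
    rw [Fin.init_update_castSucc, Fin.init_update_castSucc]
    rfl
  · -- no opposite spin among the first N sites
    have hR : move (Fin.init σ) x = Function.update (Fin.init σ) x (!(Fin.init σ) x) := by
      rw [move]; exact dif_neg h
    rw [hR]
    by_cases h' : (oppRight σ x.castSucc).Nonempty
    · -- the minimum must be the last site
      have hmin : (oppRight σ x.castSucc).min' h' = Fin.last N := by
        have hmem := (oppRight σ x.castSucc).min'_mem h'
        rcases Fin.eq_castSucc_or_eq_last ((oppRight σ x.castSucc).min' h') with ⟨w', hw⟩ | hl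
        · exact absurd (oppRight_castSucc_mem.mp (hw ▸ hmem)) (fun hm => h ⟨w', hm⟩)
        · exact hl
      rw [move, dif_pos h', hmin, Fin.init_update_last, Fin.init_update_castSucc]
      rfl
    · rw [move, dif_neg h', Fin.init_update_castSucc]
      rfl

lemma move_last_init (σ : Conf (N+1)) :
    Fin.init (move σ (Fin.last N)) = Fin.init σ := by
  have h : oppRight σ (Fin.last N) = ∅ := by
    ext y
    simp only [mem_oppRight, Finset.notMem_empty, iff_false]
    intro hy
    exact absurd hy.1 (not_lt.mpr (Fin.le_last y))
  rw [move, dif_neg (by simp [h]), Fin.init_update_last]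

/-- Summing jump rates over a fiber of the projection. -/
lemma sum_jump_fiber (σ : Conf (N+1)) (ξ' : Conf N) :
    ∑ σ' ∈ Finset.univ.filter (fun σ' => Fin.init σ' = ξ'), jumpRate lamP lamM σ σ'
      = ∑ x ∈ Finset.univ.filter (fun x => Fin.init (move σ x) = ξ'), rate lamP lamM (σ x) := by
  rw [← Finset.sum_fiberwise_of_maps_to (g := fun x => move σ x)
    (t := Finset.univ.filter (fun σ' => Fin.init σ' = ξ'))
    (fun x hx => by
      rw [Finset.mem_filter] at hx ⊢
      exact ⟨Finset.mem_univ _, hx.2⟩)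
    (fun x => rate lamP lamM (σ x))]
  refine Finset.sum_congr rfl fun σ' hσ' => ?_
  rw [Finset.mem_filter] at hσ'
  unfold jumpRate
  refine Finset.sum_congr ?_ fun _ _ => rfl
  ext x
  simp only [Finset.mem_filter, Finset.mem_univ, true_and]
  exact ⟨fun hx => ⟨by rw [hx]; exact hσ'.2, hx⟩, fun hx => hx.2⟩

lemma sum_rate_filter (σ : Conf (N+1)) (ξ' : Conf N) :
    ∑ x ∈ Finset.univ.filter (fun x => Fin.init (move σ x) = ξ'), rate lamP lamM (σ x)
      = (∑ y ∈ Finset.univ.filter (fun y => move (Fin.init σ) y = ξ'),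
          rate lamP lamM (Fin.init σ y))
        + (if Fin.init σ = ξ' then rate lamP lamM (σ (Fin.last N)) else 0) := by
  rw [Finset.sum_filter, Finset.sum_filter, Fin.sum_univ_castSucc]
  congr 1
  · refine Finset.sum_congr rfl fun y _ => ?_
    rw [move_init]
    rfl
  · rw [move_last_init]

/-- Lumpability: the generator commutes with the projection. -/
lemma lump (σ : Conf (N+1)) (ξ' : Conf N) :
    ∑ σ' ∈ Finset.univ.filter (fun σ' => Fin.init σ' = ξ'), toomGen lamP lamM (N+1) σ σ'
      = toomGen lamP lamM N (Fin.init σ) ξ' := by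
  by_cases heq : ξ' = Fin.init σ
  · subst heq
    have hmem : σ ∈ Finset.univ.filter (fun σ' => Fin.init σ' = Fin.init σ) := by simp
    rw [← Finset.add_sum_erase _ _ hmem]
    have h1 : ∑ σ' ∈ (Finset.univ.filter (fun σ' => Fin.init σ' = Fin.init σ)).erase σ,
        toomGen lamP lamM (N+1) σ σ'
        = ∑ σ' ∈ (Finset.univ.filter (fun σ' => Fin.init σ' = Fin.init σ)).erase σ,
          jumpRate lamP lamM σ σ' := by
      refine Finset.sum_congr rfl fun σ' hσ' => ?_
      rw [toomGen, if_neg (Finset.ne_of_mem_erase hσ')]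
    have h2 : jumpRate lamP lamM σ σ = 0 := by
      unfold jumpRate
      rw [Finset.sum_eq_zero_iff_of_nonneg]
      · intro x hx
        rw [Finset.mem_filter] at hx
        exact absurd hx.2 (move_ne σ x)
      · intro x hx
        rw [Finset.mem_filter] at hx
        exact absurd hx.2 (move_ne σ x)
    have h3 : ∑ σ' ∈ (Finset.univ.filter (fun σ' => Fin.init σ' = Fin.init σ)).erase σ,
        jumpRate lamP lamM σ σ'
        = ∑ σ' ∈ Finset.univ.filter (fun σ' => Fin.init σ' = Fin.init σ),
          jumpRate lamP lamM σ σ' := by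
      rw [← Finset.add_sum_erase _ _ hmem, h2, zero_add]
    rw [h1, h3, sum_jump_fiber, sum_rate_filter, if_pos rfl]
    have h4 : Finset.univ.filter (fun y => move (Fin.init σ) y = Fin.init σ) = ∅ := by
      ext y
      simp [move_ne (Fin.init σ) y]
    rw [h4, Finset.sum_empty, zero_add]
    rw [toomGen, if_pos rfl, toomGen, if_pos rfl, sum_jumpRate_ne, sum_jumpRate_ne]
    rw [Fin.sum_univ_castSucc (f := fun x => rate lamP lamM (σ x))]
    have : ∀ y : Fin N, rate lamP lamM (σ y.castSucc) = rate lamP lamM (Fin.init σ y) :=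
      fun y => rfl
    simp only [this]
    ring
  · have h1 : ∀ σ' ∈ Finset.univ.filter (fun σ' => Fin.init σ' = ξ'),
        toomGen lamP lamM (N+1) σ σ' = jumpRate lamP lamM σ σ' := by
      intro σ' hσ'
      rw [Finset.mem_filter] at hσ'
      rw [toomGen, if_neg]
      exact fun h => heq (by rw [← hσ'.2, h])
    rw [Finset.sum_congr rfl h1, sum_jump_fiber, sum_rate_filter,
      if_neg (fun h => heq h.symm), add_zero]
    rw [toomGen, if_neg heq]
    rfl

/-- The marginal of a stationary distribution on `Ω_{N+1}` is stationary on `Ω_N`. -/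
lemma marg_stationary {π₁ : Conf (N+1) → ℝ} (h : IsToomStationary lamP lamM (N+1) π₁) :
    IsToomStationary lamP lamM N
      (fun ξ => ∑ σ ∈ Finset.univ.filter (fun σ => Fin.init σ = ξ), π₁ σ) := by
  obtain ⟨hpos, hsum, hstat⟩ := h
  refine ⟨fun ξ => Finset.sum_nonneg fun σ _ => hpos σ, ?_, ?_⟩
  · rw [Finset.sum_fiberwise_of_maps_to (fun σ _ => Finset.mem_univ _) π₁]
    exact hsum
  · intro ξ'
    have key : ∀ ξ : Conf N,
        (∑ σ ∈ Finset.univ.filter (fun σ => Fin.init σ = ξ), π₁ σ) * toomGen lamP lamM N ξ ξ'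
        = ∑ σ ∈ Finset.univ.filter (fun σ => Fin.init σ = ξ),
            π₁ σ * toomGen lamP lamM N (Fin.init σ) ξ' := by
      intro ξ
      rw [Finset.sum_mul]
      refine Finset.sum_congr rfl fun σ hσ => ?_
      rw [Finset.mem_filter] at hσ
      rw [hσ.2]
    rw [Finset.sum_congr rfl fun ξ _ => key ξ]
    rw [Finset.sum_fiberwise_of_maps_to (g := fun σ : Conf (N+1) => Fin.init σ)
      (fun σ _ => Finset.mem_univ _) (fun σ => π₁ σ * toomGen lamP lamM N (Fin.init σ) ξ')]
    have : ∀ σ : Conf (N+1), π₁ σ * toomGen lamP lamM N (Fin.init σ) ξ'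
        = ∑ σ' ∈ Finset.univ.filter (fun σ' => Fin.init σ' = ξ'),
            π₁ σ * toomGen lamP lamM (N+1) σ σ' := by
      intro σ
      rw [← Finset.mul_sum, lump]
    rw [Finset.sum_congr rfl fun σ _ => this σ, Finset.sum_comm]
    exact Finset.sum_eq_zero fun σ' _ => hstat σ'

lemma fiber_eq_pair (ξ : Conf N) :
    Finset.univ.filter (fun σ : Conf (N+1) => Fin.init σ = ξ)
      = {Fin.snoc ξ false, Fin.snoc ξ true} := by
  ext σ
  simp only [Finset.mem_filter, Finset.mem_univ, true_and, Finset.mem_insert,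
    Finset.mem_singleton]
  constructor
  · rintro rfl
    rcases hb : σ (Fin.last N) with _ | _
    · left; rw [← hb, Fin.snoc_init_self]
    · right; rw [← hb, Fin.snoc_init_self]
  · rintro (rfl | rfl) <;> exact Fin.init_snoc ..

lemma snoc_ne (ξ : Conf N) : (Fin.snoc ξ false : Conf (N+1)) ≠ Fin.snoc ξ true := by
  intro h
  have := congrFun h (Fin.last N)
  simp [Fin.snoc_last] at this

lemma marg_eq (π₁ : Conf (N+1) → ℝ) (ξ : Conf N) :
    ∑ σ ∈ Finset.univ.filter (fun σ => Fin.init σ = ξ), π₁ σ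
      = π₁ (Fin.snoc ξ false) + π₁ (Fin.snoc ξ true) := by
  rw [fiber_eq_pair, Finset.sum_pair (snoc_ne ξ)]

end Proj

section Interval
variable (P : ∀ N : ℕ, Conf N → ℝ)

/-- Left endpoints of the nested interval family. -/
noncomputable def aOff : ∀ N : ℕ, Conf N → ℝ
  | 0, _ => 0
  | (N+1), η => aOff N (Fin.init η) +
      (if η (Fin.last N) then P (N+1) (Fin.snoc (Fin.init η) false) else 0)

/-- The half-open interval associated to a finite configuration. -/
noncomputable def Iset (N : ℕ) (ξ : Conf N) : Set ℝ :=
  Set.Ico (aOff P N ξ) (aOff P N ξ + P N ξ)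

variable {P}
variable (hPnn : ∀ N ξ, 0 ≤ P N ξ) (hP0 : ∀ ξ : Conf 0, P 0 ξ = 1)
  (hbr : ∀ N (ξ : Conf N), P N ξ = P (N+1) (Fin.snoc ξ false) + P (N+1) (Fin.snoc ξ true))

lemma aOff_snoc_false (N : ℕ) (ξ : Conf N) :
    aOff P (N+1) (Fin.snoc ξ false) = aOff P N ξ := by
  rw [aOff, Fin.init_snoc, Fin.snoc_last]
  simp

lemma aOff_snoc_true (N : ℕ) (ξ : Conf N) :
    aOff P (N+1) (Fin.snoc ξ true) = aOff P N ξ + P (N+1) (Fin.snoc ξ false) := by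
  rw [aOff, Fin.init_snoc, Fin.snoc_last]
  simp

include hPnn hbr in
lemma Iset_snoc_subset (N : ℕ) (ξ : Conf N) (b : Bool) :
    Iset P (N+1) (Fin.snoc ξ b) ⊆ Iset P N ξ := by
  have hb := hbr N ξ
  cases b
  · simp only [Iset, aOff_snoc_false]
    refine Set.Ico_subset_Ico le_rfl ?_
    have := hPnn (N+1) (Fin.snoc ξ true)
    linarith
  · simp only [Iset, aOff_snoc_true]
    refine Set.Ico_subset_Ico ?_ ?_
    · have := hPnn (N+1) (Fin.snoc ξ false); linarith
    · linarith

include hPnn hbr in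
lemma Iset_subset_init (N : ℕ) (η : Conf (N+1)) :
    Iset P (N+1) η ⊆ Iset P N (Fin.init η) := by
  have := Iset_snoc_subset hPnn hbr N (Fin.init η) (η (Fin.last N))
  rwa [Fin.snoc_init_self] at this

include hbr in
lemma Iset_cover (N : ℕ) (ξ : Conf N) {u : ℝ} (hu : u ∈ Iset P N ξ) :
    u ∈ Iset P (N+1) (Fin.snoc ξ false) ∨ u ∈ Iset P (N+1) (Fin.snoc ξ true) := by
  obtain ⟨h1, h2⟩ := hu
  have hb := hbr N ξ
  by_cases hc : u < aOff P N ξ + P (N+1) (Fin.snoc ξ false)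
  · left
    rw [Iset, aOff_snoc_false]
    exact ⟨h1, hc⟩
  · right
    rw [Iset, aOff_snoc_true]
    push_neg at hc
    constructor
    · exact hc
    · linarith

include hPnn hP0 hbr in
lemma Iset_subset_Ico01 (N : ℕ) (ξ : Conf N) : Iset P N ξ ⊆ Set.Ico (0:ℝ) 1 := by
  induction N with
  | zero => rw [Iset, hP0]; simp [aOff]
  | succ N ih =>
    exact (Iset_subset_init hPnn hbr N ξ).trans (ih (Fin.init ξ))

lemma Iset_snoc_disjoint {N : ℕ} {ξ : Conf N} {b b' : Bool} {u : ℝ}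
    (h : u ∈ Iset P (N+1) (Fin.snoc ξ b)) (h' : u ∈ Iset P (N+1) (Fin.snoc ξ b')) : b = b' := by
  cases b <;> cases b' <;> try rfl
  · exfalso
    simp only [Iset, aOff_snoc_false, Set.mem_Ico] at h
    simp only [Iset, aOff_snoc_true, Set.mem_Ico] at h'
    linarith [h.2, h'.1]
  · exfalso
    simp only [Iset, aOff_snoc_true, Set.mem_Ico] at h
    simp only [Iset, aOff_snoc_false, Set.mem_Ico] at h'
    linarith [h.1, h'.2]

include hPnn hbr in
lemma Iset_unique (N : ℕ) (ξ ξ' : Conf N) (u : ℝ)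
    (h : u ∈ Iset P N ξ) (h' : u ∈ Iset P N ξ') : ξ = ξ' := by
  induction N with
  | zero => exact Subsingleton.elim _ _
  | succ N ih =>
    have hinit : Fin.init ξ = Fin.init ξ' :=
      ih _ _ (Iset_subset_init hPnn hbr N ξ h) (Iset_subset_init hPnn hbr N ξ' h')
    rw [← Fin.snoc_init_self ξ] at h
    rw [← Fin.snoc_init_self ξ', ← hinit] at h'
    have hlast : ξ (Fin.last N) = ξ' (Fin.last N) := Iset_snoc_disjoint h h'
    rw [← Fin.snoc_init_self ξ, ← Fin.snoc_init_self ξ', ← hinit, hlast]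

include hP0 hbr in
lemma Iset_exists (N : ℕ) {u : ℝ} (hu : u ∈ Set.Ico (0:ℝ) 1) : ∃ ξ, u ∈ Iset P N ξ := by
  induction N with
  | zero =>
    refine ⟨fun x => false, ?_⟩
    rw [Iset, hP0]
    simpa [aOff] using hu
  | succ N ih =>
    obtain ⟨ξ, hξ⟩ := ih
    rcases Iset_cover hbr N ξ hξ with h | h
    · exact ⟨_, h⟩
    · exact ⟨_, h⟩

end Interval

open Classical in
/-- The configuration of length `N` whose interval contains `u`. -/
noncomputable def cfun (P : ∀ N : ℕ, Conf N → ℝ) (N : ℕ) (u : ℝ) : Conf N :=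
  if h : ∃ ξ, u ∈ Iset P N ξ then h.choose else (fun _ => false)

/-- The infinite configuration attached to `u ∈ [0,1)`. -/
noncomputable def gfun (P : ∀ N : ℕ, Conf N → ℝ) (u : ℝ) : ℕ → Bool :=
  fun n => cfun P (n+1) u ⟨n, n.lt_succ_self⟩

section CFun
variable {P : ∀ N : ℕ, Conf N → ℝ}
variable (hPnn : ∀ N ξ, 0 ≤ P N ξ) (hP0 : ∀ ξ : Conf 0, P 0 ξ = 1)
  (hbr : ∀ N (ξ : Conf N), P N ξ = P (N+1) (Fin.snoc ξ false) + P (N+1) (Fin.snoc ξ true))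

include hP0 hbr in
lemma cfun_mem {N : ℕ} {u : ℝ} (hu : u ∈ Set.Ico (0:ℝ) 1) : u ∈ Iset P N (cfun P N u) := by
  have hex := Iset_exists (P := P) hP0 hbr N hu
  unfold cfun
  rw [dif_pos hex]
  exact hex.choose_spec

include hPnn hP0 hbr in
lemma cfun_eq_iff {N : ℕ} {u : ℝ} (hu : u ∈ Set.Ico (0:ℝ) 1) (ξ : Conf N) :
    cfun P N u = ξ ↔ u ∈ Iset P N ξ := by
  constructor
  · rintro rfl; exact cfun_mem hP0 hbr hu
  · intro h
    exact Iset_unique hPnn hbr N _ _ u (cfun_mem hP0 hbr hu) h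

include hPnn hP0 hbr in
lemma cfun_not_mem {N : ℕ} {u : ℝ} (hu : u ∉ Set.Ico (0:ℝ) 1) :
    cfun P N u = (fun _ => false) := by
  unfold cfun
  rw [dif_neg]
  rintro ⟨ξ, hξ⟩
  exact hu (Iset_subset_Ico01 hPnn hP0 hbr N ξ hξ)

include hPnn hP0 hbr in
lemma cfun_init {N : ℕ} {u : ℝ} (hu : u ∈ Set.Ico (0:ℝ) 1) :
    Fin.init (cfun P (N+1) u) = cfun P N u := by
  have h1 : u ∈ Iset P N (Fin.init (cfun P (N+1) u)) :=
    Iset_subset_init hPnn hbr N _ (cfun_mem hP0 hbr hu)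
  exact Iset_unique hPnn hbr N _ _ u h1 (cfun_mem hP0 hbr hu)

include hPnn hP0 hbr in
lemma cfun_castLE {M N : ℕ} (h : M ≤ N) {u : ℝ} (hu : u ∈ Set.Ico (0:ℝ) 1) (x : Fin M) :
    cfun P N u (Fin.castLE h x) = cfun P M u x := by
  obtain ⟨k, rfl⟩ := Nat.exists_eq_add_of_le h
  suffices H : ∀ k : ℕ, cfun P (M + k) u (Fin.castLE (Nat.le_add_right M k) x) = cfun P M u x by
    exact H k
  intro k
  induction k with
  | zero => rfl
  | succ k ih =>
    show cfun P ((M + k) + 1) u (Fin.castLE _ x) = _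
    rw [show cfun P ((M+k)+1) u (Fin.castLE (Nat.le_add_right M (k+1)) x)
        = Fin.init (cfun P ((M+k)+1) u) (Fin.castLE (Nat.le_add_right M k) x) from rfl,
      cfun_init hPnn hP0 hbr hu]
    exact ih

include hPnn hP0 hbr in
lemma gfun_eq_iff {N : ℕ} {u : ℝ} (hu : u ∈ Set.Ico (0:ℝ) 1) (ξ : Conf N) :
    (∀ x : Fin N, gfun P u (x : ℕ) = ξ x) ↔ cfun P N u = ξ := by
  have hcoord : ∀ x : Fin N, gfun P u (x : ℕ) = cfun P N u x := by
    intro x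
    have h1 : (x : ℕ) + 1 ≤ N := x.2
    exact (cfun_castLE hPnn hP0 hbr h1 hu ⟨(x : ℕ), Nat.lt_succ_self _⟩).symm
  constructor
  · intro h
    funext x
    rw [← hcoord x, h x]
  · intro h x
    rw [hcoord x, h]

include hPnn hP0 hbr in
lemma measurableSet_cfun_eq {N : ℕ} (ξ : Conf N) : MeasurableSet {u : ℝ | cfun P N u = ξ} := by
  by_cases hd : (fun _ => false : Conf N) = ξ
  · have : {u : ℝ | cfun P N u = ξ} = Iset P N ξ ∪ (Set.Ico (0:ℝ) 1)ᶜ := by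
      ext u
      by_cases hu : u ∈ Set.Ico (0:ℝ) 1
      · simp only [Set.mem_setOf_eq, Set.mem_union, Set.mem_compl_iff, hu, not_true,
          or_false, cfun_eq_iff hPnn hP0 hbr hu]
      · simp only [Set.mem_setOf_eq, Set.mem_union, Set.mem_compl_iff, hu, not_false_iff,
          or_true, iff_true, cfun_not_mem hPnn hP0 hbr hu, hd]
    rw [this]
    exact (measurableSet_Ico).union measurableSet_Ico.compl
  · have : {u : ℝ | cfun P N u = ξ} = Iset P N ξ := by
      ext u
      by_cases hu : u ∈ Set.Ico (0:ℝ) 1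
      · simp only [Set.mem_setOf_eq, cfun_eq_iff hPnn hP0 hbr hu]
      · simp only [Set.mem_setOf_eq, cfun_not_mem hPnn hP0 hbr hu, hd, false_iff]
        intro hmem
        exact hu (Iset_subset_Ico01 hPnn hP0 hbr N ξ hmem)
    rw [this]
    exact measurableSet_Ico

include hPnn hP0 hbr in
lemma measurable_gfun : Measurable (gfun P) := by
  refine measurable_pi_lambda _ fun n => ?_
  refine measurable_to_countable' fun b => ?_
  have : (fun u => gfun P u n) ⁻¹' {b}
      = ⋃ ξ ∈ (Finset.univ.filter fun ξ : Conf (n+1) => ξ ⟨n, n.lt_succ_self⟩ = b),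
          {u : ℝ | cfun P (n+1) u = ξ} := by
    ext u
    simp only [Set.mem_preimage, Set.mem_singleton_iff, Set.mem_iUnion, Finset.mem_filter,
      Finset.mem_univ, true_and, Set.mem_setOf_eq]
    constructor
    · intro h
      exact ⟨cfun P (n+1) u, h, rfl⟩
    · rintro ⟨ξ, hξ, hc⟩
      rw [gfun, hc, hξ]
  rw [this]
  exact (Finset.univ.filter fun ξ : Conf (n+1) => ξ ⟨n, n.lt_succ_self⟩ = b).measurableSet_biUnion
    (fun ξ _ => measurableSet_cfun_eq hPnn hP0 hbr ξ)

end CFun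

open MeasureTheory

section MeasureSide
open MeasureTheory

lemma measurableSet_cyl (N : ℕ) (ξ : Conf N) :
    MeasurableSet {σ : ℕ → Bool | ∀ x : Fin N, σ (x : ℕ) = ξ x} := by
  have h : {σ : ℕ → Bool | ∀ x : Fin N, σ (x : ℕ) = ξ x}
      = ⋂ x : Fin N, (fun σ : ℕ → Bool => σ (x : ℕ)) ⁻¹' {ξ x} := by
    ext σ; simp [Set.mem_iInter]
  rw [h]
  exact MeasurableSet.iInter fun x => (measurable_pi_apply _) (measurableSet_singleton _)

/-- The candidate infinite-volume measure: push-forward of Lebesgue measure on `[0,1)`. -/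
noncomputable def toomMeasure (P : ∀ N : ℕ, Conf N → ℝ) : Measure (ℕ → Bool) :=
  (MeasureTheory.volume.restrict (Set.Ico (0:ℝ) 1)).map (gfun P)

variable {P : ∀ N : ℕ, Conf N → ℝ}
variable (hPnn : ∀ N ξ, 0 ≤ P N ξ) (hP0 : ∀ ξ : Conf 0, P 0 ξ = 1)
  (hbr : ∀ N (ξ : Conf N), P N ξ = P (N+1) (Fin.snoc ξ false) + P (N+1) (Fin.snoc ξ true))

include hPnn hP0 hbr in
lemma toomMeasure_cyl (N : ℕ) (ξ : Conf N) :
    toomMeasure P {σ : ℕ → Bool | ∀ x : Fin N, σ (x : ℕ) = ξ x} = ENNReal.ofReal (P N ξ) := by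
  rw [toomMeasure, Measure.map_apply (measurable_gfun hPnn hP0 hbr) (measurableSet_cyl N ξ),
    Measure.restrict_apply ((measurable_gfun hPnn hP0 hbr) (measurableSet_cyl N ξ))]
  have hpre : gfun P ⁻¹' {σ : ℕ → Bool | ∀ x : Fin N, σ (x:ℕ) = ξ x} ∩ Set.Ico (0:ℝ) 1
      = Iset P N ξ := by
    ext u
    constructor
    · rintro ⟨h1, h2⟩
      exact (cfun_eq_iff hPnn hP0 hbr h2 ξ).mp ((gfun_eq_iff hPnn hP0 hbr h2 ξ).mp h1)
    · intro h
      have hu : u ∈ Set.Ico (0:ℝ) 1 := Iset_subset_Ico01 hPnn hP0 hbr N ξ h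
      exact ⟨(gfun_eq_iff hPnn hP0 hbr hu ξ).mpr ((cfun_eq_iff hPnn hP0 hbr hu ξ).mpr h), hu⟩
  rw [hpre, Iset, Real.volume_Ico, add_sub_cancel_left]

include hPnn hP0 hbr in
lemma toomMeasure_prob : IsProbabilityMeasure (toomMeasure P) := by
  constructor
  rw [toomMeasure, Measure.map_apply (measurable_gfun hPnn hP0 hbr) MeasurableSet.univ,
    Set.preimage_univ, Measure.restrict_apply_univ, Real.volume_Ico]
  norm_num

/-- The π-system of cylinder sets determined by the first `N ≥ 1` coordinates. -/
def cylC : Set (Set (ℕ → Bool)) :=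
  {S | ∃ (N : ℕ) (ξ : Conf N), 1 ≤ N ∧ S = {σ : ℕ → Bool | ∀ x : Fin N, σ (x : ℕ) = ξ x}}

lemma cyl_inter_of_le {N M : ℕ} (h : N ≤ M) (ξ : Conf N) (η : Conf M)
    (hne : ({σ : ℕ → Bool | ∀ x : Fin N, σ (x:ℕ) = ξ x}
      ∩ {σ : ℕ → Bool | ∀ x : Fin M, σ (x:ℕ) = η x}).Nonempty) :
    {σ : ℕ → Bool | ∀ x : Fin N, σ (x:ℕ) = ξ x} ∩ {σ : ℕ → Bool | ∀ x : Fin M, σ (x:ℕ) = η x}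
      = {σ : ℕ → Bool | ∀ x : Fin M, σ (x:ℕ) = η x} := by
  obtain ⟨σ₀, h1, h2⟩ := hne
  refine Set.inter_eq_right.mpr ?_
  intro σ hσ x
  have hx : ((Fin.castLE h x : Fin M) : ℕ) = (x : ℕ) := rfl
  calc σ (x:ℕ) = η (Fin.castLE h x) := by rw [← hx]; exact hσ _
    _ = σ₀ (x:ℕ) := by rw [← hx]; exact (h2 _).symm
    _ = ξ x := h1 x

lemma isPiSystem_cylC : IsPiSystem cylC := by
  rintro s ⟨N, ξ, hN, rfl⟩ t ⟨M, η, hM, rfl⟩ hne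
  rcases le_total N M with h | h
  · rw [cyl_inter_of_le h ξ η hne]
    exact ⟨M, η, hM, rfl⟩
  · rw [Set.inter_comm, cyl_inter_of_le h η ξ (by rwa [Set.inter_comm] at hne)]
    exact ⟨N, ξ, hN, rfl⟩

lemma generateFrom_cylC :
    (inferInstance : MeasurableSpace (ℕ → Bool)) = MeasurableSpace.generateFrom cylC := by
  refine le_antisymm ?_ ?_
  · have h1 : ∀ n : ℕ, @Measurable _ _ (MeasurableSpace.generateFrom cylC) _
        (fun σ : ℕ → Bool => σ n) := by
      intro n
      refine @measurable_to_countable' Bool (ℕ → Bool) _ _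
        (MeasurableSpace.generateFrom cylC) _ ?_
      intro b
      have hset : (fun σ : ℕ → Bool => σ n) ⁻¹' {b}
          = ⋃ ξ ∈ (Finset.univ.filter fun ξ : Conf (n+1) => ξ ⟨n, n.lt_succ_self⟩ = b),
              {σ : ℕ → Bool | ∀ x : Fin (n+1), σ (x:ℕ) = ξ x} := by
        ext σ
        simp only [Set.mem_preimage, Set.mem_singleton_iff, Set.mem_iUnion, Finset.mem_filter,
          Finset.mem_univ, true_and, Set.mem_setOf_eq]
        constructor
        · intro hb
          exact ⟨fun k : Fin (n+1) => σ (k:ℕ), hb, fun x => rfl⟩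
        · rintro ⟨ξ, hξ, hc⟩
          have := hc ⟨n, n.lt_succ_self⟩
          rw [← hξ]
          exact this
      rw [hset]
      exact @Finset.measurableSet_biUnion (ℕ → Bool) (Conf (n+1))
        (MeasurableSpace.generateFrom cylC) _ _
        (fun ξ _ => MeasurableSpace.measurableSet_generateFrom ⟨n+1, ξ, by omega, rfl⟩)
    show (⨆ n : ℕ, MeasurableSpace.comap (fun σ : ℕ → Bool => σ n) inferInstance)
        ≤ MeasurableSpace.generateFrom cylC
    exact iSup_le fun n => measurable_iff_comap_le.mp (h1 n)
  · refine MeasurableSpace.generateFrom_le ?_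
    rintro S ⟨N, ξ, hN, rfl⟩
    exact measurableSet_cyl N ξ

end MeasureSide

/-- There is a unique probability measure `π_∞` on `{−1,1}^{ℕ≥1}`
(with the product σ-algebra) whose finite-dimensional restrictions are the stationary
distributions `π_N`. (Site `x ∈ {1,…,N}` is encoded by the coordinate `x−1 ∈ ℕ`.) -/
theorem toom_infinite_stationary_measure (lamP lamM : ℝ) (hP : 0 < lamP) (hM : 0 < lamM)
    (hsum : lamP + lamM = 1) (π : (N : ℕ) → Conf N → ℝ)
    (hπ : ∀ N : ℕ, 1 ≤ N → IsToomStationary lamP lamM N (π N)) :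
    ∃! μ : Measure (ℕ → Bool),
      IsProbabilityMeasure μ ∧
      ∀ (N : ℕ), 1 ≤ N → ∀ ξ : Conf N,
        μ {σ : ℕ → Bool | ∀ x : Fin N, σ (x : ℕ) = ξ x} = ENNReal.ofReal (π N ξ) := by
  classical
  let P : ∀ N : ℕ, Conf N → ℝ := fun N => Nat.casesOn N (fun _ => (1:ℝ)) (fun M => π (M+1))
  have hP0 : ∀ ξ : Conf 0, P 0 ξ = 1 := fun _ => rfl
  have hPnn : ∀ N ξ, 0 ≤ P N ξ := by
    intro N ξ
    cases N with
    | zero => rw [hP0 ξ]; norm_num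
    | succ M => exact (hπ (M+1) (by omega)).1 ξ
  have hbr : ∀ N (ξ : Conf N), P N ξ = P (N+1) (Fin.snoc ξ false) + P (N+1) (Fin.snoc ξ true) := by
    intro N ξ
    cases N with
    | zero =>
      have h1 := (hπ 1 le_rfl).2.1
      have h2 : Finset.univ.filter (fun σ : Conf 1 => Fin.init σ = ξ) = Finset.univ :=
        Finset.filter_true_of_mem fun σ _ => funext fun x => x.elim0
      have hme := marg_eq (π 1) ξ
      rw [h2] at hme
      show (1:ℝ) = _
      rw [← h1]
      exact hme
    | succ M =>
      have hms := marg_stationary (lamP := lamP) (lamM := lamM) (hπ (M+2) (by omega))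
      have huni := stationary_unique hP hM (by omega : 1 ≤ M + 1) (hπ (M+1) (by omega)) hms
      have hcon := congrFun huni ξ
      rw [marg_eq] at hcon
      exact hcon
  refine ⟨toomMeasure P, ⟨toomMeasure_prob hPnn hP0 hbr, ?_⟩, ?_⟩
  · intro N hN ξ
    cases N with
    | zero => omega
    | succ M => exact toomMeasure_cyl hPnn hP0 hbr (M+1) ξ
  · rintro ν ⟨hprob, hcyl⟩
    refine ext_of_generate_finite cylC generateFrom_cylC isPiSystem_cylC ?_ ?_
    · rintro s ⟨N, ξ, hN, rfl⟩
      rw [hcyl N hN ξ]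
      cases N with
      | zero => omega
      | succ M => exact (toomMeasure_cyl hPnn hP0 hbr (M+1) ξ).symm
    · rw [hprob.measure_univ, (toomMeasure_prob hPnn hP0 hbr).measure_univ]
end

section
/- Fix p ∈ (0,1) and rates λ₊, λ₋ > 0, and define l(σ) = inf{ n ≥ 1 : σ(−n) ≠ σ(0) } ∈ ℕ ∪ {∞}, the length of the maximal constant run of σ ending at site 0. Then ∫_{{σ : σ(0)=1}} l dBer_p = p/(1−p) and ∫_{{σ : σ(0)=−1}} l dBer_p = (1−p)/p. Consequently, the net mean discrepancy current across the origin, λ₊·∫_{{σ(0)=1}} l dBer_p − λ₋·∫_{{σ(0)=−1}} l dBer_p, vanishes if and only if ((1−p)/p)² = λ₊/λ₋. -/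
open Finset MeasureTheory
open scoped ENNReal

/-- Configuration space `Ω = {−1,1}^ℤ`, encoded with `true ↔ +1` and `false ↔ −1`. -/
abbrev ConfZ : Type := ℤ → Bool

/-- `μ` is the product Bernoulli measure `Ber_p` on `{−1,1}^ℤ`: it is a probability
measure whose finite cylinder probabilities are i.i.d. Bernoulli(`p`). -/
def IsBernoulli (p : ℝ) (μ : Measure ConfZ) : Prop :=
  IsProbabilityMeasure μ ∧
  ∀ (S : Finset ℤ) (ξ : ℤ → Bool),
    μ {σ : ConfZ | ∀ x ∈ S, σ x = ξ x}
      = ∏ x ∈ S, ENNReal.ofReal (if ξ x then p else 1 - p)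

/-- `l(σ) = inf{n ≥ 1 : σ(−n) ≠ σ(0)} ∈ ℕ ∪ {∞}`, the length of the maximal constant
run of `σ` ending at site `0` (with `sInf ∅ = ⊤`). -/
noncomputable def runLen (σ : ConfZ) : ℕ∞ :=
  sInf {n : ℕ∞ | ∃ m : ℕ, n = m ∧ 1 ≤ m ∧ σ (-(m : ℤ)) ≠ σ 0}

lemma enat_cast_eq_tsum (x : ℕ∞) :
    (x : ℝ≥0∞) = ∑' k : ℕ, (if ((k : ℕ∞) + 1) ≤ x then (1:ℝ≥0∞) else 0) := by
  induction x using ENat.recTopCoe with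
  | top =>
      simp only [le_top, if_true]
      rw [ENNReal.tsum_const_eq_top_of_ne_zero (by norm_num)]
      rfl
  | coe n =>
      rw [tsum_eq_sum (s := Finset.range n) (by
        intro k hk
        rw [if_neg]
        rw [Finset.mem_range, not_lt] at hk
        intro h
        have : (k:ℕ) + 1 ≤ n := by exact_mod_cast h
        omega)]
      rw [Finset.sum_congr rfl (fun k hk => by
        rw [if_pos]
        rw [Finset.mem_range] at hk
        exact_mod_cast Nat.succ_le_of_lt hk)]
      simp

lemma runLen_ge_iff (σ : ConfZ) (b : Bool) (hb : σ 0 = b) (k : ℕ) :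
    ((k : ℕ∞) + 1) ≤ runLen σ ↔ ∀ m ∈ Finset.range (k+1), σ (-(m:ℤ)) = b := by
  rw [runLen, le_sInf_iff]
  constructor
  · intro h m hm
    rw [Finset.mem_range] at hm
    by_contra hne
    rcases Nat.eq_zero_or_pos m with rfl | hmp
    · simp [hb] at hne
    · have := h (m : ℕ∞) ⟨m, rfl, hmp, by rw [hb]; exact hne⟩
      have : (k:ℕ) + 1 ≤ m := by exact_mod_cast this
      omega
  · intro h n hn
    obtain ⟨m, rfl, hm1, hmne⟩ := hn
    have : ¬ m < k + 1 := fun hc => hmne (by rw [hb]; exact h m (Finset.mem_range.mpr hc))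
    exact_mod_cast Nat.le_of_not_lt fun hc => this (by omega)

lemma meas_cyl {p : ℝ} {μ : Measure ConfZ} (hμ : IsBernoulli p μ) (b : Bool) (k : ℕ) :
    μ {σ : ConfZ | ∀ m ∈ Finset.range (k+1), σ (-(m:ℤ)) = b}
      = ENNReal.ofReal (if b then p else 1 - p) ^ (k+1) := by
  have hinj : Function.Injective (fun m : ℕ => -(m:ℤ)) := by
    intro a b h; simpa using h
  have := hμ.2 ((Finset.range (k+1)).image (fun m : ℕ => -(m:ℤ))) (fun _ => b)
  rw [show {σ : ConfZ | ∀ x ∈ (Finset.range (k+1)).image (fun m : ℕ => -(m:ℤ)), σ x = b}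
      = {σ : ConfZ | ∀ m ∈ Finset.range (k+1), σ (-(m:ℤ)) = b} by
    ext σ; simp [Finset.mem_image]] at this
  rw [this, Finset.prod_const, Finset.card_image_of_injective _ hinj, Finset.card_range]

lemma cyl_measurable (b : Bool) (k : ℕ) :
    MeasurableSet {σ : ConfZ | ∀ m ∈ Finset.range (k+1), σ (-(m:ℤ)) = b} := by
  have : {σ : ConfZ | ∀ m ∈ Finset.range (k+1), σ (-(m:ℤ)) = b}
      = ⋂ m ∈ Finset.range (k+1), {σ : ConfZ | σ (-(m:ℤ)) = b} := by
    ext σ; simp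
  rw [this]
  exact MeasurableSet.biInter (Finset.range (k+1)).countable_toSet
    (fun m _ => show MeasurableSet ((fun σ : ConfZ => σ (-(m:ℤ))) ⁻¹' {b}) from
      measurable_pi_apply _ (measurableSet_singleton b))

lemma integral_runLen {p : ℝ} (hp0 : 0 < p) (hp1 : p < 1)
    {μ : Measure ConfZ} (hμ : IsBernoulli p μ) (b : Bool) :
    ∫⁻ σ in {σ : ConfZ | σ 0 = b}, (runLen σ : ℝ≥0∞) ∂μ
      = ENNReal.ofReal ((if b then p else 1 - p) / (1 - (if b then p else 1 - p))) := by
  set q : ℝ := if b then p else 1 - p with hq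
  have hq0 : 0 < q := by rcases b <;> simp [hq] <;> linarith
  have hq1 : q < 1 := by rcases b <;> simp [hq] <;> linarith
  have hA : MeasurableSet {σ : ConfZ | σ 0 = b} :=
    show MeasurableSet ((fun σ : ConfZ => σ 0) ⁻¹' {b}) from
      measurable_pi_apply _ (measurableSet_singleton b)
  -- pointwise identity
  have hpt : ∀ σ : ConfZ, Set.indicator {σ : ConfZ | σ 0 = b}
      (fun σ => (runLen σ : ℝ≥0∞)) σ
      = ∑' k : ℕ, Set.indicator {σ : ConfZ | ∀ m ∈ Finset.range (k+1), σ (-(m:ℤ)) = b}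
          (fun _ => (1:ℝ≥0∞)) σ := by
    intro σ
    by_cases hb : σ 0 = b
    · rw [Set.indicator_of_mem (show σ ∈ {σ : ConfZ | σ 0 = b} from hb), enat_cast_eq_tsum]
      congr 1; ext k
      by_cases h : ((k : ℕ∞) + 1) ≤ runLen σ
      · rw [if_pos h, Set.indicator_of_mem (show σ ∈ {σ : ConfZ | ∀ m ∈ Finset.range (k+1), σ (-(m:ℤ)) = b} from (runLen_ge_iff σ b hb k).mp h)]
      · rw [if_neg h, Set.indicator_of_notMem
          (show σ ∉ {σ : ConfZ | ∀ m ∈ Finset.range (k+1), σ (-(m:ℤ)) = b} from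
            fun hc => h ((runLen_ge_iff σ b hb k).mpr hc))]
    · rw [Set.indicator_of_notMem (show σ ∉ {σ : ConfZ | σ 0 = b} from hb)]
      symm
      rw [ENNReal.tsum_eq_zero]
      intro k
      exact Set.indicator_of_notMem (fun hc => hb (by simpa using hc 0 (by simp))) _
  rw [← lintegral_indicator hA]
  calc ∫⁻ σ, Set.indicator {σ : ConfZ | σ 0 = b} (fun σ => (runLen σ : ℝ≥0∞)) σ ∂μ
      = ∫⁻ σ, ∑' k : ℕ, Set.indicator
          {σ : ConfZ | ∀ m ∈ Finset.range (k+1), σ (-(m:ℤ)) = b} (fun _ => (1:ℝ≥0∞)) σ ∂μ := by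
        exact lintegral_congr hpt
    _ = ∑' k : ℕ, ∫⁻ σ, Set.indicator
          {σ : ConfZ | ∀ m ∈ Finset.range (k+1), σ (-(m:ℤ)) = b} (fun _ => (1:ℝ≥0∞)) σ ∂μ := by
        exact lintegral_tsum (fun k =>
          ((measurable_const.indicator (cyl_measurable b k)).aemeasurable))
    _ = ∑' k : ℕ, ENNReal.ofReal q ^ (k+1) := by
        refine tsum_congr (fun k => ?_)
        rw [lintegral_indicator (cyl_measurable b k), lintegral_const,
          Measure.restrict_apply MeasurableSet.univ, Set.univ_inter, one_mul,
          meas_cyl hμ b k]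
    _ = ENNReal.ofReal (q / (1 - q)) := by
        rw [ENNReal.ofReal_div_of_pos (by linarith)]
        have : ∀ k : ℕ, ENNReal.ofReal q ^ (k+1) = ENNReal.ofReal q * ENNReal.ofReal q ^ k := by
          intro k; ring
        simp_rw [this]
        rw [ENNReal.tsum_mul_left, ENNReal.tsum_geometric,
          ← ENNReal.ofReal_one, ← ENNReal.ofReal_sub _ hq0.le, div_eq_mul_inv _ _]

/-- Under `Ber_p`, `∫_{σ(0)=+1} l = p/(1−p)` and
`∫_{σ(0)=−1} l = (1−p)/p`; consequently the net mean discrepancy current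
`λ₊·∫_{σ(0)=+1} l − λ₋·∫_{σ(0)=−1} l` vanishes iff `((1−p)/p)² = λ₊/λ₋`. -/
theorem bernoulli_current_balance (p lamP lamM : ℝ) (hp0 : 0 < p) (hp1 : p < 1)
    (hP : 0 < lamP) (hM : 0 < lamM)
    (μ : Measure ConfZ) (hμ : IsBernoulli p μ) :
    ∫⁻ σ in {σ : ConfZ | σ 0 = true}, (runLen σ : ℝ≥0∞) ∂μ = ENNReal.ofReal (p / (1 - p)) ∧
    ∫⁻ σ in {σ : ConfZ | σ 0 = false}, (runLen σ : ℝ≥0∞) ∂μ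
      = ENNReal.ofReal ((1 - p) / p) ∧
    (lamP * (∫⁻ σ in {σ : ConfZ | σ 0 = true}, (runLen σ : ℝ≥0∞) ∂μ).toReal
        - lamM * (∫⁻ σ in {σ : ConfZ | σ 0 = false}, (runLen σ : ℝ≥0∞) ∂μ).toReal = 0
      ↔ ((1 - p) / p) ^ 2 = lamP / lamM) := by
  have hT : ∫⁻ σ in {σ : ConfZ | σ 0 = true}, (runLen σ : ℝ≥0∞) ∂μ
      = ENNReal.ofReal (p / (1 - p)) := by
    simpa using integral_runLen hp0 hp1 hμ true
  have hF : ∫⁻ σ in {σ : ConfZ | σ 0 = false}, (runLen σ : ℝ≥0∞) ∂μ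
      = ENNReal.ofReal ((1 - p) / p) := by
    have := integral_runLen hp0 hp1 hμ false
    simpa using this
  have h1p : (0:ℝ) < 1 - p := by linarith
  have hpne : p ≠ 0 := ne_of_gt hp0
  have h1pne : (1:ℝ) - p ≠ 0 := ne_of_gt h1p
  refine ⟨hT, hF, ?_⟩
  rw [hT, hF, ENNReal.toReal_ofReal (div_nonneg hp0.le h1p.le),
    ENNReal.toReal_ofReal (div_nonneg h1p.le hp0.le)]
  rw [sub_eq_zero]
  constructor
  · intro h
    field_simp at h ⊢
    nlinarith [h]
  · intro h
    field_simp at h ⊢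
    nlinarith [h]
end

section
/- Fix rates λ₊, λ₋ ≥ 0 with λ₊ + λ₋ = 1, and write λ_{+1} = λ₊, λ_{−1} = λ₋. For a triple w = (x,y,η) with integers x < y and η ∈ {−1,1}, define the operator A_w on functions f : Ω → ℝ by (A_w f)(σ) = λ_η · 1[σ(z) = η for all x ≤ z < y] · 1[σ(y) = −η] · ( f(σ^{x,y}) − f(σ) ), where σ^{x,y} is σ with the values at x and y negated. For a finite set S ⊂ ℤ and ξ : S → {−1,1}, let χ_ξ(σ) = 1 if σ agrees with ξ on S and 0 otherwise. Then for every finite sequence of triples w_1,…,w_m and every (S,ξ) there exist a finite set S' ⊆ S ∪ [x_1,y_1] ∪ … ∪ [x_m,y_m], a map ξ' : S' → {−1,1}, and a real number c with |c| ≤ 1, such that A_{w_m} ∘ ⋯ ∘ A_{w_1} (χ_ξ) = c · χ_{ξ'}. That is, any composition of generator terms applied to the indicator of a single cylinder configuration is a scalar multiple, of magnitude at most 1, of the indicator of a single cylinder configuration (possibly zero). -/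
open Finset

/-- `σ` with the spins at the two sites `x` and `y` negated. -/
def flipTwo (σ : ConfZ) (x y : ℤ) : ConfZ :=
  Function.update (Function.update σ x (!σ x)) y (!σ y)

/-- For a triple `w = (x, y, η)`, the operator
`(A_w f)(σ) = λ_η · 1[σ ≡ η on [x,y)] · 1[σ(y) = −η] · (f(σ^{x,y}) − f(σ))`. -/
noncomputable def genOp (lamP lamM : ℝ) (w : ℤ × ℤ × Bool) (f : ConfZ → ℝ) (σ : ConfZ) : ℝ :=
  (if w.2.2 then lamP else lamM) *
    (if ∀ z ∈ Finset.Ico w.1 w.2.1, σ z = w.2.2 then (1 : ℝ) else 0) *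
    (if σ w.2.1 = !w.2.2 then (1 : ℝ) else 0) *
    (f (flipTwo σ w.1 w.2.1) - f σ)

/-- The cylinder indicator `χ_ξ` on a finite set `S`: equal to `1` on configurations
agreeing with `ξ` on `S`, and `0` otherwise. -/
def cylInd (S : Finset ℤ) (ξ : ℤ → Bool) (σ : ConfZ) : ℝ :=
  if ∀ x ∈ S, σ x = ξ x then 1 else 0

lemma flipTwo_apply (σ : ConfZ) (x y z : ℤ) (hxy : x ≠ y) :
    flipTwo σ x y z = if z = x ∨ z = y then !σ z else σ z := by
  unfold flipTwo
  rcases eq_or_ne z y with rfl | hzy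
  · simp [Function.update_apply]
  · rcases eq_or_ne z x with rfl | hzx
    · simp [Function.update_apply, hzy]
    · simp [Function.update_apply, hzy, hzx]

lemma prod3 (A B C : Prop) [Decidable A] [Decidable B] [Decidable C] :
    (if A then (1:ℝ) else 0) * (if B then (1:ℝ) else 0) * (if C then (1:ℝ) else 0)
      = if A ∧ B ∧ C then 1 else 0 := by
  split_ifs <;> simp_all

lemma genOp_step (lamP lamM : ℝ) (hP : 0 ≤ lamP) (hM : 0 ≤ lamM) (hsum : lamP + lamM = 1)
    (w : ℤ × ℤ × Bool) (hw : w.1 < w.2.1) (S : Finset ℤ) (ξ : ℤ → Bool) (c : ℝ) :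
    ∃ (ξ' : ℤ → Bool) (c' : ℝ), |c'| ≤ |c| ∧
      genOp lamP lamM w (fun σ => c * cylInd S ξ σ)
        = fun σ => c' * cylInd (S ∪ Finset.Icc w.1 w.2.1) ξ' σ := by
  classical
  obtain ⟨x, y, η⟩ := w
  simp only at hw
  have hxy : x ≠ y := ne_of_lt hw
  set lam : ℝ := if η then lamP else lamM with hlamdef
  have hlam0 : 0 ≤ lam := by rw [hlamdef]; split_ifs <;> assumption
  have hlam1 : lam ≤ 1 := by rw [hlamdef]; split_ifs <;> linarith
  set Θ : (ℤ → Bool) → ℤ → Bool :=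
    fun θ z => if z ∈ S then θ z else if z = y then !η else η with hΘdef
  set compat : (ℤ → Bool) → Prop :=
    fun θ => (∀ z ∈ S, z ∈ Finset.Ico x y → θ z = η) ∧ (y ∈ S → θ y = !η) with hcompatdef
  set S' : Finset ℤ := S ∪ Finset.Icc x y with hS'def
  -- key iff
  have key : ∀ θ (σ : ConfZ), compat θ →
      (((∀ z ∈ Finset.Ico x y, σ z = η) ∧ σ y = !η ∧ ∀ z ∈ S, σ z = θ z) ↔
        ∀ z ∈ S', σ z = Θ θ z) := by
    intro θ σ hc
    constructor
    · rintro ⟨h1, h2, h3⟩ z hz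
      simp only [hS'def, Finset.mem_union] at hz
      by_cases hzS : z ∈ S
      · simpa [hΘdef, hzS] using h3 z hzS
      · rcases hz with hz | hz
        · exact absurd hz hzS
        · rcases eq_or_ne z y with rfl | hzy
          · simpa [hΘdef, hzS] using h2
          · have hzIco : z ∈ Finset.Ico x y := by
              rw [Finset.mem_Icc] at hz
              exact Finset.mem_Ico.mpr ⟨hz.1, lt_of_le_of_ne hz.2 hzy⟩
            simpa [hΘdef, hzS, hzy] using h1 z hzIco
    · intro h
      have hyIcc : y ∈ S' := by
        simp [hS'def, Finset.mem_Icc, hw.le]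
      refine ⟨?_, ?_, ?_⟩
      · intro z hzIco
        have hzS' : z ∈ S' := by
          simp only [hS'def, Finset.mem_union]
          right
          rw [Finset.mem_Ico] at hzIco
          exact Finset.mem_Icc.mpr ⟨hzIco.1, hzIco.2.le⟩
        have hzy : z ≠ y := by
          rw [Finset.mem_Ico] at hzIco; exact ne_of_lt hzIco.2
        by_cases hzS : z ∈ S
        · rw [h z hzS']
          simpa [hΘdef, hzS] using hc.1 z hzS hzIco
        · rw [h z hzS']
          simp [hΘdef, hzS, hzy]
      · rw [h y hyIcc]
        by_cases hyS : y ∈ S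
        · simpa [hΘdef, hyS] using hc.2 hyS
        · simp [hΘdef, hyS]
      · intro z hzS
        have := h z (by simp [hS'def, hzS])
        simpa [hΘdef, hzS] using this
  have key2 : ∀ θ (σ : ConfZ), ¬ compat θ →
      ¬ ((∀ z ∈ Finset.Ico x y, σ z = η) ∧ σ y = !η ∧ ∀ z ∈ S, σ z = θ z) := by
    rintro θ σ hc ⟨h1, h2, h3⟩
    exact hc ⟨fun z hzS hzIco => (h3 z hzS).symm.trans (h1 z hzIco),
      fun hyS => (h3 y hyS).symm.trans h2⟩
  have merge : ∀ θ (σ : ConfZ),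
      (if ∀ z ∈ Finset.Ico x y, σ z = η then (1:ℝ) else 0) *
        (if σ y = !η then (1:ℝ) else 0) * cylInd S θ σ
      = if compat θ then cylInd S' (Θ θ) σ else 0 := by
    intro θ σ
    unfold cylInd
    rw [prod3]
    by_cases hc : compat θ
    · rw [if_pos hc, if_congr (key θ σ hc) rfl rfl]
    · rw [if_neg hc, if_neg (key2 θ σ hc)]
  set ξ'' : ℤ → Bool := fun z => if z = x ∨ z = y then !ξ z else ξ z with hξ''def
  have flipeq : ∀ σ : ConfZ, cylInd S ξ (flipTwo σ x y) = cylInd S ξ'' σ := by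
    intro σ
    unfold cylInd
    apply if_congr _ rfl rfl
    apply forall₂_congr
    intro z hzS
    rw [flipTwo_apply σ x y z hxy]
    by_cases hz : z = x ∨ z = y
    · simp only [hz, if_pos, hξ''def]
      cases σ z <;> cases ξ z <;> simp
    · simp [hz, hξ''def]
  have expand : ∀ σ : ConfZ, genOp lamP lamM (x, y, η) (fun σ => c * cylInd S ξ σ) σ
      = lam * c * ((if compat ξ'' then cylInd S' (Θ ξ'') σ else 0)
          - (if compat ξ then cylInd S' (Θ ξ) σ else 0)) := by
    intro σ
    have m1 := merge ξ'' σ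
    have m2 := merge ξ σ
    simp only [genOp]
    rw [flipeq σ, ← hlamdef, ← m1, ← m2]
    ring
  by_cases h1 : compat ξ'' <;> by_cases h2 : compat ξ
  · -- both compatible: then x ∉ S and y ∉ S, and Θ ξ'' = Θ ξ, difference vanishes
    have hxS : x ∉ S := by
      intro hxS
      have e1 := h1.1 x hxS (Finset.mem_Ico.mpr ⟨le_refl x, hw⟩)
      have e2 := h2.1 x hxS (Finset.mem_Ico.mpr ⟨le_refl x, hw⟩)
      rw [hξ''def] at e1
      simp only [eq_self_iff_true, true_or, if_pos] at e1
      rw [e2] at e1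
      simp at e1
    have hyS : y ∉ S := by
      intro hyS
      have e1 := h1.2 hyS
      have e2 := h2.2 hyS
      rw [hξ''def] at e1
      simp only [eq_self_iff_true, or_true, if_pos] at e1
      rw [e2] at e1
      simp at e1
    have hΘeq : Θ ξ'' = Θ ξ := by
      funext z
      simp only [hΘdef]
      by_cases hzS : z ∈ S
      · have hzx : z ≠ x := fun h => hxS (h ▸ hzS)
        have hzy : z ≠ y := fun h => hyS (h ▸ hzS)
        simp [hzS, hξ''def, hzx, hzy]
      · simp [hzS]
    refine ⟨Θ ξ, 0, by simp [abs_nonneg], ?_⟩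
    funext σ
    rw [expand σ, if_pos h1, if_pos h2, hΘeq]
    ring
  · refine ⟨Θ ξ'', lam * c, ?_, ?_⟩
    · rw [abs_mul, abs_of_nonneg hlam0]
      nlinarith [abs_nonneg c]
    · funext σ
      rw [expand σ, if_pos h1, if_neg h2]
      ring
  · refine ⟨Θ ξ, -(lam * c), ?_, ?_⟩
    · rw [abs_neg, abs_mul, abs_of_nonneg hlam0]
      nlinarith [abs_nonneg c]
    · funext σ
      rw [expand σ, if_neg h1, if_pos h2]
      ring
  · refine ⟨ξ, 0, by simp [abs_nonneg], ?_⟩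
    funext σ
    rw [expand σ, if_neg h1, if_neg h2]
    ring

lemma genOp_foldl_aux (lamP lamM : ℝ) (hP : 0 ≤ lamP) (hM : 0 ≤ lamM)
    (hsum : lamP + lamM = 1) :
    ∀ (ws : List (ℤ × ℤ × Bool)), (∀ w ∈ ws, w.1 < w.2.1) →
    ∀ (S : Finset ℤ) (ξ : ℤ → Bool) (c : ℝ), |c| ≤ 1 →
    ∃ (S' : Finset ℤ) (ξ' : ℤ → Bool) (c' : ℝ),
      S' ⊆ S ∪ ws.foldr (fun w acc => Finset.Icc w.1 w.2.1 ∪ acc) ∅ ∧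
      |c'| ≤ 1 ∧
      ws.foldl (fun g w => genOp lamP lamM w g) (fun σ => c * cylInd S ξ σ)
        = fun σ => c' * cylInd S' ξ' σ := by
  intro ws
  induction ws with
  | nil =>
    intro _ S ξ c hc
    exact ⟨S, ξ, c, by simp, hc, rfl⟩
  | cons w ws ih =>
    intro hws S ξ c hc
    obtain ⟨ξ₁, c₁, hc₁, heq₁⟩ :=
      genOp_step lamP lamM hP hM hsum w (hws w (by simp)) S ξ c
    obtain ⟨S', ξ', c', hsub, hc', heq⟩ :=
      ih (fun w' hw' => hws w' (by simp [hw'])) (S ∪ Finset.Icc w.1 w.2.1) ξ₁ c₁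
        (hc₁.trans hc)
    refine ⟨S', ξ', c', ?_, hc', ?_⟩
    · simp only [List.foldr_cons]
      intro z hz
      have := hsub hz
      simp only [Finset.mem_union] at this ⊢
      tauto
    · simp only [List.foldl_cons]
      rw [heq₁]
      exact heq


/-- Any composition `A_{w_m} ∘ ⋯ ∘ A_{w_1}` of generator terms applied
to a cylinder indicator `χ_ξ` equals `c · χ_{ξ'}` for a single cylinder `(S', ξ')` with
`S' ⊆ S ∪ [x_1,y_1] ∪ ⋯ ∪ [x_m,y_m]` and a scalar `c` with `|c| ≤ 1` (possibly zero). -/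
theorem genOp_comp_cylinder (lamP lamM : ℝ) (hP : 0 ≤ lamP) (hM : 0 ≤ lamM)
    (hsum : lamP + lamM = 1) (ws : List (ℤ × ℤ × Bool)) (hws : ∀ w ∈ ws, w.1 < w.2.1)
    (S : Finset ℤ) (ξ : ℤ → Bool) :
    ∃ (S' : Finset ℤ) (ξ' : ℤ → Bool) (c : ℝ),
      S' ⊆ S ∪ ws.foldr (fun w acc => Finset.Icc w.1 w.2.1 ∪ acc) ∅ ∧
      |c| ≤ 1 ∧
      ws.foldl (fun g w => genOp lamP lamM w g) (cylInd S ξ)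
        = fun σ => c * cylInd S' ξ' σ := by
  have h1 : cylInd S ξ = fun σ => (1 : ℝ) * cylInd S ξ σ := by
    funext σ; rw [one_mul]
  rw [h1]
  exact genOp_foldl_aux lamP lamM hP hM hsum ws hws S ξ 1 (by norm_num)
end
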